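/- arXiv:1508.02842 — 7 statements merged into one kernel-verified Lean document; each statement's English description precedes it below -/
import Mathlib

section
/- Let 1/2 ≤ H₁ < H₂ < 1 and T > 0. Define φ(s,u) = (min(s,u))^{1-2H₁} · u^{2H₁-1} · |s-u|^{2H₂-2H₁-1}. Then sup_{u ∈ [0,T]} ∫₀ᵀ φ(s,u) ds ≤ C·T^{2H₂-2H₁} for some constant C depending only on H₁, H₂; in particular φ(·,u) ∈ L¹[0,T] for every u, with uniformly bounded L¹ norm. -/
open MeasureTheory intervalIntegral Set

/-!
With `a = 1 - 2H₁` and `b = 2H₂ - 2H₁ - 1`, both exponents exceed `-1`. For `u > 0` the integrand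
is `(s/u)^a (u-s)^b` on `[0,u]` and `(s-u)^b` on `[u,T]`. The substitution `s = ut` turns the first
piece into `u^(b+1)` times the Beta integral `∫₀¹ t^a (1-t)^b`, and the second piece integrates to
`(T-u)^(b+1)/(b+1)`; both are bounded by multiples of `T^(b+1)`. For `u = 0` the integrand is
`0^a 0^(-a) s^b`, where `0^a 0^(-a)` is `1` if `a = 0` and `0` otherwise.
-/

noncomputable def hurstKernel (a b u s : ℝ) : ℝ := min s u ^ a * u ^ (-a) * |s - u| ^ b

lemma intervalIntegrable_rpow_mul_one_sub_rpow_zero_half {a : ℝ} (ha : -1 < a) (b : ℝ) :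
    IntervalIntegrable (fun t : ℝ => t ^ a * (1 - t) ^ b) volume 0 (1 / 2) :=
  (intervalIntegrable_rpow' ha).mul_continuousOn <| by
    rw [uIcc_of_le (by norm_num)]
    exact (continuousOn_const.sub continuousOn_id).rpow_const fun t ht =>
      Or.inl (by simp only [Pi.sub_apply, id]; linarith [ht.2])

lemma intervalIntegrable_rpow_mul_one_sub_rpow {a b : ℝ} (ha : -1 < a) (hb : -1 < b) :
    IntervalIntegrable (fun t : ℝ => t ^ a * (1 - t) ^ b) volume 0 1 := by
  refine (intervalIntegrable_rpow_mul_one_sub_rpow_zero_half ha b).trans ?_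
  convert ((intervalIntegrable_rpow_mul_one_sub_rpow_zero_half hb a).comp_sub_left 1).symm
    using 1
  · ext t
    rw [sub_sub_cancel, mul_comm]
  · norm_num
  · norm_num

lemma integral_rpow_mul_one_sub_rpow_nonneg (a b : ℝ) :
    0 ≤ ∫ t in 0..1, t ^ a * (1 - t) ^ b :=
  integral_nonneg zero_le_one fun _ ht =>
    mul_nonneg (Real.rpow_nonneg ht.1 a) (Real.rpow_nonneg (sub_nonneg.2 ht.2) b)

section

variable {a b u T s : ℝ}

lemma hurstKernel_of_le (hu : 0 < u) (hs : u ≤ s) : hurstKernel a b u s = (s - u) ^ b := by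
  rw [hurstKernel, min_eq_right hs, abs_of_nonneg (sub_nonneg.2 hs), ← Real.rpow_add hu,
    add_neg_cancel, Real.rpow_zero, one_mul]

lemma hurstKernel_of_mem_Icc (hu : 0 < u) (hs : s ∈ Icc 0 u) :
    hurstKernel a b u s = u ^ b * ((s / u) ^ a * (1 - s / u) ^ b) := by
  rw [hurstKernel, min_eq_left hs.2, abs_of_nonpos (sub_nonpos.2 hs.2), neg_sub,
    Real.div_rpow hs.1 hu.le, one_sub_div hu.ne', Real.div_rpow (sub_nonneg.2 hs.2) hu.le,
    Real.rpow_neg hu.le]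
  field_simp

lemma hurstKernel_zero (hs : 0 ≤ s) : hurstKernel a b 0 s = 0 ^ a * 0 ^ (-a) * s ^ b := by
  rw [hurstKernel, min_eq_right hs, sub_zero, abs_of_nonneg hs]

lemma intervalIntegrable_hurstKernel_zero_self (ha : -1 < a) (hb : -1 < b) (hu : 0 < u) :
    IntervalIntegrable (hurstKernel a b u) volume 0 u := by
  have h := ((intervalIntegrable_rpow_mul_one_sub_rpow ha hb).comp_mul_left
    (c := u⁻¹)).const_mul (u ^ b)
  rw [zero_div, one_div, inv_inv] at h
  refine h.congr fun s hs => ?_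
  rw [hurstKernel_of_mem_Icc hu (Ioc_subset_Icc_self (uIoc_of_le hu.le ▸ hs)), inv_mul_eq_div]

lemma integral_hurstKernel_zero_self (hu : 0 < u) :
    ∫ s in 0..u, hurstKernel a b u s = u ^ (b + 1) * ∫ t in 0..1, t ^ a * (1 - t) ^ b := by
  rw [integral_congr (g := fun s => u ^ b * ((s / u) ^ a * (1 - s / u) ^ b)) fun s hs =>
      hurstKernel_of_mem_Icc hu (uIcc_of_le hu.le ▸ hs),
    intervalIntegral.integral_const_mul, integral_comp_div (fun t => t ^ a * (1 - t) ^ b) hu.ne', zero_div, div_self hu.ne',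
    Real.rpow_add_one hu.ne', smul_eq_mul, mul_assoc]

lemma intervalIntegrable_hurstKernel_self (hb : -1 < b) (hu : 0 < u) (huT : u ≤ T) :
    IntervalIntegrable (hurstKernel a b u) volume u T := by
  have h := (intervalIntegrable_rpow' hb (a := 0) (b := T - u)).comp_sub_right u
  rw [zero_add, sub_add_cancel] at h
  exact h.congr fun s hs => (hurstKernel_of_le hu (uIoc_of_le huT ▸ hs).1.le).symm

lemma integral_hurstKernel_self (hb : -1 < b) (hu : 0 < u) (huT : u ≤ T) :
    ∫ s in u..T, hurstKernel a b u s = (T - u) ^ (b + 1) / (b + 1) := by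
  rw [integral_congr (g := fun s => (s - u) ^ b) fun s hs =>
      hurstKernel_of_le hu (uIcc_of_le huT ▸ hs).1,
    integral_comp_sub_right (fun x => x ^ b), sub_self, integral_rpow (Or.inl hb),
    Real.zero_rpow (by linarith : b + 1 ≠ 0), sub_zero]

lemma intervalIntegrable_hurstKernel_zero (hb : -1 < b) (hT : 0 ≤ T) :
    IntervalIntegrable (hurstKernel a b 0) volume 0 T :=
  ((intervalIntegrable_rpow' hb).const_mul _).congr fun _ hs =>
    (hurstKernel_zero (uIoc_of_le hT ▸ hs).1.le).symm

lemma integral_hurstKernel_zero (hb : -1 < b) (hT : 0 ≤ T) :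
    ∫ s in 0..T, hurstKernel a b 0 s = 0 ^ a * 0 ^ (-a) * (T ^ (b + 1) / (b + 1)) := by
  rw [integral_congr (g := fun s => 0 ^ a * 0 ^ (-a) * s ^ b) fun s hs =>
      hurstKernel_zero (uIcc_of_le hT ▸ hs).1,
    intervalIntegral.integral_const_mul, integral_rpow (Or.inl hb), Real.zero_rpow (by linarith : b + 1 ≠ 0), sub_zero]

lemma intervalIntegrable_hurstKernel (ha : -1 < a) (hb : -1 < b) (hu : 0 ≤ u) (huT : u ≤ T) :
    IntervalIntegrable (hurstKernel a b u) volume 0 T := by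
  rcases hu.eq_or_lt with rfl | hu
  · exact intervalIntegrable_hurstKernel_zero hb huT
  · exact (intervalIntegrable_hurstKernel_zero_self ha hb hu).trans
      (intervalIntegrable_hurstKernel_self hb hu huT)

lemma integral_hurstKernel_le (ha : -1 < a) (hb : -1 < b) (hu : 0 ≤ u) (huT : u ≤ T) :
    ∫ s in 0..T, hurstKernel a b u s ≤
      ((∫ t in 0..1, t ^ a * (1 - t) ^ b) + 1 / (b + 1)) * T ^ (b + 1) := by
  have hb1 : 0 < b + 1 := by linarith
  have hB := integral_rpow_mul_one_sub_rpow_nonneg a b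
  have hT : 0 ≤ T ^ (b + 1) := Real.rpow_nonneg (hu.trans huT) _
  rcases hu.eq_or_lt with rfl | hu
  · have hc : (0 : ℝ) ^ a * 0 ^ (-a) ≤ 1 :=
      mul_le_one₀ (Real.zero_rpow_le_one a) (Real.rpow_nonneg le_rfl _) (Real.zero_rpow_le_one _)
    rw [integral_hurstKernel_zero hb huT]
    calc _ ≤ T ^ (b + 1) / (b + 1) := mul_le_of_le_one_left (div_nonneg hT hb1.le) hc
      _ ≤ (∫ t in 0..1, t ^ a * (1 - t) ^ b) * T ^ (b + 1) + T ^ (b + 1) / (b + 1) :=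
          le_add_of_nonneg_left (mul_nonneg hB hT)
      _ = _ := by ring
  · have h₁ : u ^ (b + 1) ≤ T ^ (b + 1) := Real.rpow_le_rpow hu.le huT hb1.le
    have h₂ : (T - u) ^ (b + 1) ≤ T ^ (b + 1) :=
      Real.rpow_le_rpow (sub_nonneg.2 huT) (by linarith) hb1.le
    rw [← integral_add_adjacent_intervals (intervalIntegrable_hurstKernel_zero_self ha hb hu)
      (intervalIntegrable_hurstKernel_self hb hu huT), integral_hurstKernel_zero_self hu,
      integral_hurstKernel_self hb hu huT]
    calc _ ≤ T ^ (b + 1) * (∫ t in 0..1, t ^ a * (1 - t) ^ b) + T ^ (b + 1) / (b + 1) := by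
          gcongr
      _ = _ := by ring

end

theorem stmt1_general (H₁ H₂ : ℝ) (h12 : H₁ < H₂) (h2 : H₂ < 1) :
    ∃ C : ℝ, 0 < C ∧ ∀ T : ℝ, 0 < T → ∀ u ∈ Set.Icc (0:ℝ) T,
      IntegrableOn
        (fun s => (min s u) ^ (1 - 2*H₁) * u ^ (2*H₁ - 1) * |s - u| ^ (2*H₂ - 2*H₁ - 1))
        (Set.Icc 0 T) volume ∧
      (∫ s in (0:ℝ)..T,
          (min s u) ^ (1 - 2*H₁) * u ^ (2*H₁ - 1) * |s - u| ^ (2*H₂ - 2*H₁ - 1))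
        ≤ C * T ^ (2*H₂ - 2*H₁) := by
  have ha : -1 < 1 - 2*H₁ := by linarith
  have hb : -1 < 2*H₂ - 2*H₁ - 1 := by linarith
  have hφ (u : ℝ) : (fun s => (min s u) ^ (1 - 2*H₁) * u ^ (2*H₁ - 1) *
      |s - u| ^ (2*H₂ - 2*H₁ - 1)) = hurstKernel (1 - 2*H₁) (2*H₂ - 2*H₁ - 1) u := by
    funext s
    rw [hurstKernel, neg_sub]
  refine ⟨(∫ t in 0..1, t ^ (1 - 2*H₁) * (1 - t) ^ (2*H₂ - 2*H₁ - 1)) + 1 / (2*H₂ - 2*H₁),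
    add_pos_of_nonneg_of_pos (integral_rpow_mul_one_sub_rpow_nonneg _ _)
      (one_div_pos.2 (by linarith)), fun T hT u hu => ?_⟩
  have hbound := integral_hurstKernel_le ha hb hu.1 hu.2
  rw [sub_add_cancel] at hbound
  rw [hφ u]
  exact ⟨(intervalIntegrable_iff_integrableOn_Icc_of_le hT.le).1
    (intervalIntegrable_hurstKernel ha hb hu.1 hu.2), hbound⟩

theorem stmt1 (H₁ H₂ : ℝ) (h1 : 1/2 ≤ H₁) (h12 : H₁ < H₂) (h2 : H₂ < 1) :
    ∃ C : ℝ, 0 < C ∧ ∀ T : ℝ, 0 < T → ∀ u ∈ Set.Icc (0:ℝ) T,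
      IntegrableOn
        (fun s => (min s u) ^ (1 - 2*H₁) * u ^ (2*H₁ - 1) * |s - u| ^ (2*H₂ - 2*H₁ - 1))
        (Set.Icc 0 T) volume ∧
      (∫ s in (0:ℝ)..T,
          (min s u) ^ (1 - 2*H₁) * u ^ (2*H₁ - 1) * |s - u| ^ (2*H₂ - 2*H₁ - 1))
        ≤ C * T ^ (2*H₂ - 2*H₁) :=
  stmt1_general H₁ H₂ h12 h2
end

section
/- Let 1/2 ≤ H₁ < H₂ < 1. With φ(s,u) = (min(s,u))^{1-2H₁} u^{2H₁-1} |s-u|^{2H₂-2H₁-1}, the map u ↦ φ(·,u) from [0,T] to L¹[0,T] is continuous; that is, for every u₁ ∈ [0,T], ∫₀ᵀ |φ(s,u) - φ(s,u₁)| ds → 0 as u → u₁. -/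
open MeasureTheory Filter

noncomputable def phi (H₁ H₂ s u : ℝ) : ℝ :=
  if u = 0 then s ^ (2*H₂ - 2*H₁ - 1)
  else (min s u) ^ (1 - 2*H₁) * u ^ (2*H₁ - 1) * |s - u| ^ (2*H₂ - 2*H₁ - 1)

/-!
Scheffé's argument: for nonnegative integrands, `|f - g| = f + g - 2 min f g`, and
`min (φ(·,u)) (φ(·,u₁))` is dominated by `φ(·,u₁)` and tends to it pointwise (`φ(s,·)` is
continuous away from `u = s`), so it suffices that `∫₀ᵀ φ(s,u) ds` is continuous in `u`.
That integral is explicit: substituting `s = u t` below `u` gives a Beta integral times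
`u^(2H₂-2H₁)`, and above `u` the integrand is `(s-u)^(2H₂-2H₁-1)`.
-/

open Set Topology

theorem tendsto_integral_abs_sub_of_tendsto_integral {α ι : Type*} [MeasurableSpace α]
    {μ : Measure α} {l : Filter ι} [l.IsCountablyGenerated] {F : ι → α → ℝ} {f : α → ℝ}
    (hF_nonneg : ∀ᶠ i in l, 0 ≤ᵐ[μ] F i) (hF_int : ∀ᶠ i in l, Integrable (F i) μ)
    (hf : Integrable f μ) (hF_lim : ∀ᵐ a ∂μ, Tendsto (fun i => F i a) l (𝓝 (f a)))
    (h_int_lim : Tendsto (fun i => ∫ a, F i a ∂μ) l (𝓝 (∫ a, f a ∂μ))) :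
    Tendsto (fun i => ∫ a, |F i a - f a| ∂μ) l (𝓝 0) := by
  have h_min : Tendsto (fun i => ∫ a, min (F i a) (f a) ∂μ) l (𝓝 (∫ a, f a ∂μ)) := by
    refine tendsto_integral_filter_of_dominated_convergence (fun a => |f a|) ?_ ?_ hf.abs ?_
    · filter_upwards [hF_int] with i hi using hi.aestronglyMeasurable.inf hf.aestronglyMeasurable
    · filter_upwards [hF_nonneg] with i hi
      filter_upwards [hi] with a (ha : 0 ≤ F i a)
      rw [Real.norm_eq_abs, abs_le]
      exact ⟨le_min (ha.trans' (neg_nonpos.2 (abs_nonneg _))) (neg_abs_le _),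
        (min_le_right _ _).trans (le_abs_self _)⟩
    · filter_upwards [hF_lim] with a ha
      simpa using ha.min (tendsto_const_nhds (x := f a))
  have h_eq : ∀ᶠ i in l, ∫ a, F i a ∂μ + ∫ a, f a ∂μ - 2 * ∫ a, min (F i a) (f a) ∂μ
      = ∫ a, |F i a - f a| ∂μ := by
    filter_upwards [hF_int] with i hi
    have h_abs (a : α) : |F i a - f a| = F i a + f a - 2 * min (F i a) (f a) := by
      rw [← max_sub_min_eq_abs']
      linarith [min_add_max (F i a) (f a)]
    simp_rw [h_abs]
    rw [integral_sub (f := fun a => F i a + f a) (g := fun a => 2 * min (F i a) (f a))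
      (hi.add hf) ((hi.inf hf).const_mul 2), integral_add hi hf, integral_const_mul]
  refine (tendsto_congr' h_eq).1 ?_
  convert (h_int_lim.add_const (∫ a, f a ∂μ)).sub (h_min.const_mul 2) using 2
  ring

theorem intervalIntegrable_rpow_mul_sub_rpow {p q c : ℝ} (hp : -1 < p) (hq : -1 < q)
    (hc : 0 < c) : IntervalIntegrable (fun s => s ^ p * (c - s) ^ q) volume 0 c := by
  have h_left : IntervalIntegrable (fun s => s ^ p * (c - s) ^ q) volume 0 (c / 2) := by
    refine (intervalIntegral.intervalIntegrable_rpow' hp).mul_continuousOn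
      (ContinuousOn.rpow_const (by fun_prop) fun s hs => Or.inl ?_)
    rw [uIcc_of_le (by positivity)] at hs
    linarith [hs.2]
  have h_right : IntervalIntegrable (fun s => s ^ p * (c - s) ^ q) volume (c / 2) c := by
    have h_sub : IntervalIntegrable (fun s => (c - s) ^ q) volume (c / 2) c := by
      simpa using (intervalIntegral.intervalIntegrable_rpow' hq (a := c - c / 2)
        (b := c - c)).comp_sub_left c
    refine h_sub.continuousOn_mul (ContinuousOn.rpow_const (by fun_prop) fun s hs => Or.inl ?_)
    rw [uIcc_of_le (by linarith)] at hs
    linarith [hs.1]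
  exact h_left.trans h_right

theorem integral_rpow_mul_sub_rpow {p q c : ℝ} (hc : 0 < c) :
    ∫ s in (0:ℝ)..c, s ^ p * (c - s) ^ q
      = c ^ (p + q + 1) * ∫ t in (0:ℝ)..1, t ^ p * (1 - t) ^ q := by
  have h_scale : ∫ s in (0:ℝ)..c, s ^ p * (c - s) ^ q
      = c * ∫ t in (0:ℝ)..1, (c * t) ^ p * (c - c * t) ^ q := by
    simpa using (intervalIntegral.smul_integral_comp_mul_left
      (fun s => s ^ p * (c - s) ^ q) c (a := 0) (b := 1)).symm
  have h_factor : ∫ t in (0:ℝ)..1, (c * t) ^ p * (c - c * t) ^ q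
      = ∫ t in (0:ℝ)..1, (c ^ p * c ^ q) * (t ^ p * (1 - t) ^ q) := by
    refine intervalIntegral.integral_congr fun t ht => ?_
    rw [uIcc_of_le zero_le_one] at ht
    rw [show c - c * t = c * (1 - t) by ring, Real.mul_rpow hc.le ht.1,
      Real.mul_rpow hc.le (by linarith [ht.2])]
    ring
  rw [h_scale, h_factor, intervalIntegral.integral_const_mul, Real.rpow_add hc,
    Real.rpow_add hc, Real.rpow_one]
  ring

theorem integral_sub_rpow {r u T : ℝ} (hr : -1 < r) :
    ∫ s in u..T, (s - u) ^ r = (T - u) ^ (r + 1) / (r + 1) := by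
  rw [intervalIntegral.integral_comp_sub_right (fun x => x ^ r), sub_self,
    integral_rpow (Or.inl hr), Real.zero_rpow (by linarith), sub_zero]

section phi

variable {H₁ H₂ s u : ℝ}

theorem phi_zero_right : phi H₁ H₂ s 0 = s ^ (2*H₂ - 2*H₁ - 1) := if_pos rfl

theorem phi_of_le (hu : 0 < u) (hsu : s ≤ u) :
    phi H₁ H₂ s u = u ^ (2*H₁ - 1) * (s ^ (1 - 2*H₁) * (u - s) ^ (2*H₂ - 2*H₁ - 1)) := by
  rw [phi, if_neg hu.ne', min_eq_left hsu, abs_sub_comm, abs_of_nonneg (sub_nonneg.2 hsu)]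
  ring

theorem phi_of_ge (hu : 0 < u) (hus : u ≤ s) :
    phi H₁ H₂ s u = (s - u) ^ (2*H₂ - 2*H₁ - 1) := by
  rw [phi, if_neg hu.ne', min_eq_right hus, abs_of_nonneg (sub_nonneg.2 hus),
    ← Real.rpow_add hu]
  simp

theorem phi_nonneg (hs : 0 ≤ s) (hu : 0 ≤ u) : 0 ≤ phi H₁ H₂ s u := by
  unfold phi
  split_ifs
  · exact Real.rpow_nonneg hs _
  · have := le_min hs hu
    positivity

theorem continuousWithinAt_phi (hs : 0 < s) (hsu : s ≠ u) (hu : 0 ≤ u) :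
    ContinuousWithinAt (phi H₁ H₂ s) (Ici 0) u := by
  rcases hu.eq_or_lt with rfl | hu
  · have h_eq : phi H₁ H₂ s =ᶠ[𝓝[Ici 0] 0] fun v => (s - v) ^ (2*H₂ - 2*H₁ - 1) := by
      filter_upwards [self_mem_nhdsWithin, nhdsWithin_le_nhds (eventually_lt_nhds hs)]
        with v (hv : 0 ≤ v) hvs
      rcases hv.eq_or_lt with rfl | hv
      · rw [phi_zero_right, sub_zero]
      · exact phi_of_ge hv hvs.le
    refine ContinuousWithinAt.congr_of_eventuallyEq ?_ h_eq (by rw [phi_zero_right, sub_zero])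
    exact (ContinuousAt.rpow_const (by fun_prop)
      (Or.inl (by simpa using hs.ne'))).continuousWithinAt
  · have h_eq : phi H₁ H₂ s =ᶠ[𝓝 u]
        fun v => min s v ^ (1 - 2*H₁) * v ^ (2*H₁ - 1) * |s - v| ^ (2*H₂ - 2*H₁ - 1) := by
      filter_upwards [eventually_ne_nhds hu.ne'] with v hv
      rw [phi, if_neg hv]
    refine (ContinuousAt.congr_of_eventuallyEq ?_ h_eq).continuousWithinAt
    refine ((ContinuousAt.rpow_const (by fun_prop) (Or.inl (lt_min hs hu).ne')).mul
      (ContinuousAt.rpow_const (by fun_prop) (Or.inl hu.ne'))).mul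
      (ContinuousAt.rpow_const (by fun_prop) (Or.inl ?_))
    simpa [sub_eq_zero] using hsu

theorem intervalIntegrable_phi_left (h₁ : H₁ < 1) (h12 : H₁ < H₂) (hu : 0 < u) :
    IntervalIntegrable (fun s => phi H₁ H₂ s u) volume 0 u := by
  refine ((intervalIntegrable_rpow_mul_sub_rpow (p := 1 - 2*H₁) (q := 2*H₂ - 2*H₁ - 1)
    (by linarith) (by linarith) hu).const_mul (u ^ (2*H₁ - 1))).congr fun s hs => ?_
  rw [uIoc_of_le hu.le] at hs
  exact (phi_of_le hu hs.2).symm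

theorem intervalIntegrable_phi_right {T : ℝ} (h12 : H₁ < H₂) (hu : 0 < u) (huT : u ≤ T) :
    IntervalIntegrable (fun s => phi H₁ H₂ s u) volume u T := by
  have h_sub : IntervalIntegrable (fun s => (s - u) ^ (2*H₂ - 2*H₁ - 1)) volume u T := by
    simpa using (intervalIntegral.intervalIntegrable_rpow' (by linarith) (a := u - u)
      (b := T - u)).comp_sub_right u
  refine h_sub.congr fun s hs => ?_
  rw [uIoc_of_le huT] at hs
  exact (phi_of_ge hu hs.1.le).symm

theorem intervalIntegrable_phi {T : ℝ} (h₁ : H₁ < 1) (h12 : H₁ < H₂) (hu : u ∈ Icc 0 T) :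
    IntervalIntegrable (fun s => phi H₁ H₂ s u) volume 0 T := by
  rcases hu.1.eq_or_lt with rfl | hu₀
  · simpa only [phi_zero_right] using
      intervalIntegral.intervalIntegrable_rpow' (by linarith) (a := 0) (b := T)
  · exact (intervalIntegrable_phi_left h₁ h12 hu₀).trans
      (intervalIntegrable_phi_right h12 hu₀ hu.2)

theorem integral_phi {T : ℝ} (h₁ : H₁ < 1) (h12 : H₁ < H₂) (hu : u ∈ Icc 0 T) :
    ∫ s in (0:ℝ)..T, phi H₁ H₂ s u
      = (∫ t in (0:ℝ)..1, t ^ (1 - 2*H₁) * (1 - t) ^ (2*H₂ - 2*H₁ - 1)) * u ^ (2*H₂ - 2*H₁)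
        + (T - u) ^ (2*H₂ - 2*H₁) / (2*H₂ - 2*H₁) := by
  have h_exp : 2*H₂ - 2*H₁ - 1 + 1 = 2*H₂ - 2*H₁ := by ring
  rcases hu.1.eq_or_lt with rfl | hu₀
  · have h_pow := integral_sub_rpow (u := 0) (T := T) (r := 2*H₂ - 2*H₁ - 1) (by linarith)
    simp only [sub_zero, h_exp] at h_pow
    simp_rw [phi_zero_right, h_pow, Real.zero_rpow (by linarith : 2*H₂ - 2*H₁ ≠ 0), mul_zero,
      zero_add, sub_zero]
  have h_left : ∫ s in (0:ℝ)..u, phi H₁ H₂ s u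
      = (∫ t in (0:ℝ)..1, t ^ (1 - 2*H₁) * (1 - t) ^ (2*H₂ - 2*H₁ - 1)) * u ^ (2*H₂ - 2*H₁) := by
    rw [intervalIntegral.integral_congr fun s hs => phi_of_le hu₀ (uIcc_of_le hu₀.le ▸ hs).2,
      intervalIntegral.integral_const_mul, integral_rpow_mul_sub_rpow hu₀, ← mul_assoc,
      ← Real.rpow_add hu₀]
    ring_nf
  have h_right : ∫ s in u..T, phi H₁ H₂ s u = (T - u) ^ (2*H₂ - 2*H₁) / (2*H₂ - 2*H₁) := by
    rw [intervalIntegral.integral_congr fun s hs => phi_of_ge hu₀ (uIcc_of_le hu.2 ▸ hs).1,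
      integral_sub_rpow (by linarith), h_exp]
  rw [← intervalIntegral.integral_add_adjacent_intervals (intervalIntegrable_phi_left h₁ h12 hu₀)
    (intervalIntegrable_phi_right h12 hu₀ hu.2), h_left, h_right]

theorem continuousOn_integral_phi (h₁ : H₁ < 1) (h12 : H₁ < H₂) (T : ℝ) :
    ContinuousOn (fun u => ∫ s in (0:ℝ)..T, phi H₁ H₂ s u) (Icc 0 T) := by
  have h_pow : Continuous fun x : ℝ => x ^ (2*H₂ - 2*H₁) :=
    Real.continuous_rpow_const (by linarith)
  exact ContinuousOn.congr (by fun_prop) fun u hu => integral_phi h₁ h12 hu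

end phi

theorem stmt2_general (H₁ H₂ T : ℝ) (h12 : H₁ < H₂) (h2 : H₂ < 1)
    (u₁ : ℝ) (hu₁ : u₁ ∈ Set.Icc 0 T) :
    Tendsto (fun u => ∫ s in (0:ℝ)..T, |phi H₁ H₂ s u - phi H₁ H₂ s u₁|)
      (nhdsWithin u₁ (Set.Icc 0 T)) (nhds 0) := by
  have h₁ : H₁ < 1 := h12.trans h2
  have hT : 0 ≤ T := hu₁.1.trans hu₁.2
  have h_int : ∀ u ∈ Icc 0 T, Integrable (fun s => phi H₁ H₂ s u) (volume.restrict (Ioc 0 T)) :=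
    fun u hu => (intervalIntegrable_iff_integrableOn_Ioc_of_le hT).1
      (intervalIntegrable_phi h₁ h12 hu)
  simp_rw [intervalIntegral.integral_of_le hT]
  refine tendsto_integral_abs_sub_of_tendsto_integral ?_ ?_ (h_int u₁ hu₁) ?_ ?_
  · filter_upwards [self_mem_nhdsWithin] with u hu
    filter_upwards [ae_restrict_mem measurableSet_Ioc] with s hs using phi_nonneg hs.1.le hu.1
  · filter_upwards [self_mem_nhdsWithin] with u hu using h_int u hu
  · filter_upwards [ae_restrict_mem measurableSet_Ioc, Measure.ae_ne _ u₁] with s hs hsu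
    exact (continuousWithinAt_phi hs.1 hsu hu₁.1).mono Icc_subset_Ici_self
  · simpa only [intervalIntegral.integral_of_le hT] using
      (continuousOn_integral_phi h₁ h12 T u₁ hu₁).tendsto

theorem stmt2 (H₁ H₂ T : ℝ) (h1 : 1/2 ≤ H₁) (h12 : H₁ < H₂) (h2 : H₂ < 1) (hT : 0 < T)
    (u₁ : ℝ) (hu₁ : u₁ ∈ Set.Icc 0 T) :
    Tendsto (fun u => ∫ s in (0:ℝ)..T, |phi H₁ H₂ s u - phi H₁ H₂ s u₁|)
      (nhdsWithin u₁ (Set.Icc 0 T)) (nhds 0) :=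
  stmt2_general H₁ H₂ T h12 h2 u₁ hu₁
end

section
/- For c > b > 0, 0 < a ≤ 1, c - b > 1, and x ∈ (0,1), the Gauss hypergeometric function satisfies F(a,b,c;x) < (1 - (b/(c-1))·x)^{-a}, where F(a,b,c;x) = (1/B(b,c-b)) ∫₀¹ t^{b-1}(1-t)^{c-b-1}(1-xt)^{-a} dt. -/
open MeasureTheory

noncomputable def betaB (a b : ℝ) : ℝ := ∫ x in (0:ℝ)..1, x ^ (a - 1) * (1 - x) ^ (b - 1)

lemma betaB_eq_re (p q : ℝ) : betaB p q = (Complex.betaIntegral p q).re := by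
  rw [Complex.betaIntegral]
  have : (∫ x in (0:ℝ)..1, (x:ℂ) ^ ((p:ℂ) - 1) * (1 - x) ^ ((q:ℂ) - 1))
      = ∫ x in (0:ℝ)..1, ((x ^ (p-1) * (1-x) ^ (q-1) : ℝ) : ℂ) := by
    apply intervalIntegral.integral_congr
    intro t ht
    rw [Set.uIcc_of_le (by norm_num : (0:ℝ) ≤ 1)] at ht
    show (t:ℂ) ^ ((p:ℂ) - 1) * (1 - (t:ℂ)) ^ ((q:ℂ) - 1) = ((t ^ (p-1) * (1-t) ^ (q-1) : ℝ) : ℂ)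
    rw [Complex.ofReal_mul, Complex.ofReal_cpow ht.1, Complex.ofReal_cpow (by linarith [ht.2])]
    push_cast
    ring
  rw [this, intervalIntegral.integral_ofReal, Complex.ofReal_re, betaB]

lemma betaB_eq_Gamma {p q : ℝ} (hp : 0 < p) (hq : 0 < q) :
    betaB p q = Real.Gamma p * Real.Gamma q / Real.Gamma (p + q) := by
  have h := Complex.Gamma_mul_Gamma_eq_betaIntegral
    (by simpa using hp : 0 < (p:ℂ).re) (by simpa using hq : 0 < (q:ℂ).re)
  have hpq : Real.Gamma (p + q) ≠ 0 := (Real.Gamma_pos_of_pos (by linarith)).ne'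
  have hpqc : ((Real.Gamma (p + q) : ℝ) : ℂ) ≠ 0 := by exact_mod_cast hpq
  have h2 : Complex.betaIntegral p q = ((Real.Gamma p * Real.Gamma q / Real.Gamma (p+q) : ℝ) : ℂ) := by
    have hc : ((p:ℂ) + q) = ((p + q : ℝ) : ℂ) := by push_cast; ring
    rw [hc, Complex.Gamma_ofReal, Complex.Gamma_ofReal, Complex.Gamma_ofReal] at h
    push_cast
    rw [eq_div_iff hpqc]
    linear_combination -h
  rw [betaB_eq_re, h2, Complex.ofReal_re]

lemma betaIntegrand_intOn {p q : ℝ} (hp : 0 < p) (hq : 0 < q) :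
    IntegrableOn (fun t : ℝ => t ^ (p-1) * (1-t) ^ (q-1)) (Set.Ioo (0:ℝ) 1) := by
  have h := (Complex.betaIntegral_convergent (u := (p:ℂ)) (v := (q:ℂ))
    (by simpa using hp) (by simpa using hq)).1
  have h2 := (h.mono_set Set.Ioo_subset_Ioc_self).re
  apply h2.congr
  filter_upwards [ae_restrict_mem measurableSet_Ioo] with t ht
  show ((t:ℂ) ^ ((p:ℂ)-1) * (1-(t:ℂ)) ^ ((q:ℂ)-1)).re = _
  rw [show (1 - (t:ℂ)) = ((1 - t : ℝ) : ℂ) by push_cast; ring,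
    show ((p:ℂ)-1) = ((p-1:ℝ):ℂ) by push_cast; ring,
    show ((q:ℂ)-1) = ((q-1:ℝ):ℂ) by push_cast; ring,
    ← Complex.ofReal_cpow ht.1.le, ← Complex.ofReal_cpow (by linarith [ht.2] : (0:ℝ) ≤ 1 - t),
    ← Complex.ofReal_mul, Complex.ofReal_re]

lemma betaB_eq_Ioo (p q : ℝ) :
    betaB p q = ∫ t in Set.Ioo (0:ℝ) 1, t ^ (p-1) * (1-t) ^ (q-1) := by
  rw [betaB, intervalIntegral.integral_of_le (by norm_num), integral_Ioc_eq_integral_Ioo]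

lemma betaB_pos {p q : ℝ} (hp : 0 < p) (hq : 0 < q) : 0 < betaB p q := by
  rw [betaB_eq_Ioo]
  have hne : 0 ≤ᵐ[volume.restrict (Set.Ioo (0:ℝ) 1)] fun t : ℝ => t ^ (p-1) * (1-t) ^ (q-1) := by
    filter_upwards [ae_restrict_mem measurableSet_Ioo] with t ht
    exact mul_nonneg (Real.rpow_nonneg ht.1.le _) (Real.rpow_nonneg (by linarith [ht.2]) _)
  rw [setIntegral_pos_iff_support_of_nonneg_ae hne (betaIntegrand_intOn hp hq)]
  have hsub : Set.Ioo (0:ℝ) 1 ⊆ Function.support (fun t : ℝ => t ^ (p-1) * (1-t) ^ (q-1)) ∩ Set.Ioo 0 1 := by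
    intro t ht
    refine ⟨?_, ht⟩
    have h1 : (0:ℝ) < t ^ (p-1) := Real.rpow_pos_of_pos ht.1 _
    have h2 : (0:ℝ) < (1-t) ^ (q-1) := Real.rpow_pos_of_pos (by linarith [ht.2]) _
    exact (mul_pos h1 h2).ne'
  calc (0:ENNReal) < volume (Set.Ioo (0:ℝ) 1) := by simp
    _ ≤ _ := measure_mono hsub

lemma betaB_rec {p q : ℝ} (hp : 0 < p) (hq : 1 < q) :
    (p + q - 1) * betaB p q = (q - 1) * betaB p (q - 1) := by
  have hq0 : 0 < q := by linarith
  have hq1 : 0 < q - 1 := by linarith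
  rw [betaB_eq_Gamma hp hq0, betaB_eq_Gamma hp hq1]
  have h1 : Real.Gamma q = (q - 1) * Real.Gamma (q - 1) := by
    rw [show q = (q - 1) + 1 by ring, Real.Gamma_add_one hq1.ne']
    ring_nf
  have h2 : Real.Gamma (p + q) = (p + q - 1) * Real.Gamma (p + (q - 1)) := by
    rw [show p + q = (p + (q - 1)) + 1 by ring, Real.Gamma_add_one (by positivity)]
    ring_nf
  have hg1 : Real.Gamma (p + (q-1)) ≠ 0 := (Real.Gamma_pos_of_pos (by linarith)).ne'
  have hg2 : Real.Gamma (p + q) ≠ 0 := (Real.Gamma_pos_of_pos (by linarith)).ne'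
  have hn : p + q - 1 ≠ 0 := ne_of_gt (by linarith)
  rw [h1, h2]
  field_simp

noncomputable def gaussF (a b c x : ℝ) : ℝ :=
  (betaB b (c - b))⁻¹ * ∫ t in (0:ℝ)..1, t ^ (b - 1) * (1 - t) ^ (c - b - 1) * (1 - x*t) ^ (-a)

-- tangent line inequality for concave rpow
lemma rpow_tangent {v m a : ℝ} (hv : 0 < v) (hm : 0 < m) (ha0 : 0 < a) (ha1 : a ≤ 1) :
    v ^ a ≤ m ^ a + a * m ^ (a - 1) * (v - m) := by
  have h := Real.geom_mean_le_arith_mean2_weighted (by linarith : (0:ℝ) ≤ 1 - a) ha0.le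
    hm.le hv.le (by ring)
  -- h : m ^ (1-a) * v ^ a ≤ (1-a) * m + a * v
  have hmul := mul_le_mul_of_nonneg_left h (Real.rpow_pos_of_pos hm (a-1)).le
  have e1 : m ^ (a-1) * (m ^ (1-a) * v ^ a) = v ^ a := by
    rw [← mul_assoc, ← Real.rpow_add hm]
    norm_num
  have e2 : m ^ (a-1) * m = m ^ a := by
    nth_rewrite 2 [← Real.rpow_one m]
    rw [← Real.rpow_add hm]
    norm_num
  nlinarith [hmul, e1, e2]
set_option maxHeartbeats 2000000 in
theorem stmt5 (a b c x : ℝ) (hcb : c > b) (hb : b > 0) (ha0 : 0 < a) (ha1 : a ≤ 1)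
    (hcb1 : c - b > 1) (hx : x ∈ Set.Ioo (0:ℝ) 1) :
    gaussF a b c x < (1 - (b / (c - 1)) * x) ^ (-a) := by
  obtain ⟨hx0, hx1⟩ := hx
  have he0 : (0:ℝ) < c - b - 1 := by linarith
  have hc1 : b < c - 1 := by linarith
  have hd0 : (0:ℝ) < c - 1 - b * x := by nlinarith
  obtain ⟨d, hd_def⟩ : ∃ y : ℝ, y = c - 1 - b * x := ⟨_, rfl⟩
  obtain ⟨e, he_def⟩ : ∃ y : ℝ, y = c - b - 1 := ⟨_, rfl⟩
  have hd : 0 < d := hd_def ▸ hd0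
  have he : 0 < e := he_def ▸ he0
  obtain ⟨m, hm_def⟩ : ∃ y : ℝ, y = (c - 1) / d := ⟨_, rfl⟩
  obtain ⟨ρ, hρ_def⟩ : ∃ y : ℝ, y = (c - 1) / e := ⟨_, rfl⟩
  obtain ⟨β, hβ_def⟩ : ∃ y : ℝ, y = x * e ^ 2 / d ^ 2 := ⟨_, rfl⟩
  obtain ⟨α, hα_def⟩ : ∃ y : ℝ, y = (c - 1) ^ 2 * (1 - x) / d ^ 2 := ⟨_, rfl⟩
  have hm : 0 < m := hm_def ▸ div_pos (by linarith) hd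
  have hρ : 0 < ρ := hρ_def ▸ div_pos (by linarith) he
  have hβpos : 0 < β := hβ_def ▸ div_pos (by positivity) (by positivity)
  obtain ⟨P, hP_def⟩ : ∃ y : ℝ, y = m ^ a + a * m ^ (a - 1) * (α - m) := ⟨_, rfl⟩
  obtain ⟨Q, hQ_def⟩ : ∃ y : ℝ, y = a * m ^ (a - 1) * β := ⟨_, rfl⟩
  have hQpos : 0 < Q := by
    rw [hQ_def]
    have := Real.rpow_pos_of_pos hm (a - 1)
    positivity
  -- functions
  obtain ⟨G, hG_def⟩ : ∃ F : ℝ → ℝ,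
      F = fun t => t ^ (b - 1) * (1 - t) ^ (c - b - 1) * (1 - x * t) ^ (-a) := ⟨_, rfl⟩
  obtain ⟨H, hH_def⟩ : ∃ F : ℝ → ℝ, F = fun t => P * (t ^ (b - 1) * (1 - t) ^ (c - b - 1))
      + Q * (t ^ (b - 1) * (1 - t) ^ (c - b - 1 - 1)) := ⟨_, rfl⟩
  -- pointwise bounds
  have key : ∀ t ∈ Set.Ioo (0:ℝ) 1, G t ≤ H t ∧ (t ≠ 1 - ρ⁻¹ → G t < H t) := by
    intro t ht
    obtain ⟨ht0, ht1⟩ := ht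
    have h1t : (0:ℝ) < 1 - t := by linarith
    have hxt : (0:ℝ) < 1 - x * t := by nlinarith
    have hw : (0:ℝ) < t ^ (b - 1) * (1 - t) ^ (c - b - 1) := by
      have := Real.rpow_pos_of_pos ht0 (b-1)
      have := Real.rpow_pos_of_pos h1t (c-b-1)
      positivity
    -- step 2 : (1-x*t)⁻¹ ≤ α + β*(1-t)⁻¹, strict unless (1-t)⁻¹ = ρ
    have step2 : α + β * (1 - t)⁻¹ - (1 - x * t)⁻¹
        = (1 - x) * β * ((1 - t)⁻¹ - ρ) ^ 2 * ((1 - t) / (1 - x * t)) := by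
      rw [hβ_def, hα_def, hρ_def]
      field_simp [hd.ne', he.ne', h1t.ne', hxt.ne']
      rw [hd_def, he_def]
      ring
    -- step 1 : tangent
    have hv : (0:ℝ) < (1 - x * t)⁻¹ := by positivity
    have step1 : (1 - x * t)⁻¹ ^ a ≤ m ^ a + a * m ^ (a - 1) * ((1 - x * t)⁻¹ - m) :=
      rpow_tangent hv hm ha0 ha1
    have hrpow : (1 - x * t) ^ (-a) = (1 - x * t)⁻¹ ^ a := by
      rw [Real.rpow_neg hxt.le, ← Real.inv_rpow hxt.le]
    have hsplit : (1 - t) ^ (c - b - 1 - 1) = (1 - t) ^ (c - b - 1) * (1 - t)⁻¹ := by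
      rw [Real.rpow_sub h1t, Real.rpow_one, div_eq_mul_inv]
    have ham : 0 < a * m ^ (a - 1) := by
      have := Real.rpow_pos_of_pos hm (a - 1); positivity
    have hHG : H t - G t = (t ^ (b - 1) * (1 - t) ^ (c - b - 1)) *
        ((P + Q * (1 - t)⁻¹) - (1 - x * t)⁻¹ ^ a) := by
      simp only [hH_def, hG_def]
      rw [hrpow, hsplit]
      ring
    have h1x : (0:ℝ) < 1 - x := by linarith
    have step2' : (1 - x * t)⁻¹ ≤ α + β * (1 - t)⁻¹ := by
      have hR : 0 ≤ (1 - x) * β * ((1 - t)⁻¹ - ρ) ^ 2 * ((1 - t) / (1 - x * t)) :=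
        mul_nonneg (mul_nonneg (mul_nonneg h1x.le hβpos.le) (sq_nonneg _)) (div_pos h1t hxt).le
      linarith [step2]
    have chain : (1 - x * t)⁻¹ ^ a ≤ P + Q * (1 - t)⁻¹ := by
      have : m ^ a + a * m ^ (a - 1) * ((1 - x * t)⁻¹ - m)
          ≤ m ^ a + a * m ^ (a - 1) * ((α + β * (1 - t)⁻¹) - m) := by
        have := mul_le_mul_of_nonneg_left step2' ham.le
        linarith
      calc (1 - x * t)⁻¹ ^ a ≤ _ := step1
        _ ≤ _ := this
        _ = P + Q * (1 - t)⁻¹ := by rw [hP_def, hQ_def]; ring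
    constructor
    · have := mul_nonneg hw.le (sub_nonneg.mpr chain)
      linarith [hHG]
    · intro htne
      have hsne : (1 - t)⁻¹ - ρ ≠ 0 := by
        intro hcon
        apply htne
        have : (1 - t)⁻¹ = ρ := by linarith
        have h1tρ : 1 - t = ρ⁻¹ := by
          rw [← this, inv_inv]
        linarith
      have step2s : (1 - x * t)⁻¹ < α + β * (1 - t)⁻¹ := by
        have hsq : 0 < ((1 - t)⁻¹ - ρ) ^ 2 := by
          have h := abs_pos.mpr hsne
          nlinarith [sq_abs ((1 - t)⁻¹ - ρ)]
        have hR : 0 < (1 - x) * β * ((1 - t)⁻¹ - ρ) ^ 2 * ((1 - t) / (1 - x * t)) :=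
          mul_pos (mul_pos (mul_pos h1x hβpos) hsq) (div_pos h1t hxt)
        linarith [step2]
      have chains : (1 - x * t)⁻¹ ^ a < P + Q * (1 - t)⁻¹ := by
        have : m ^ a + a * m ^ (a - 1) * ((1 - x * t)⁻¹ - m)
            < m ^ a + a * m ^ (a - 1) * ((α + β * (1 - t)⁻¹) - m) := by
          have := mul_lt_mul_of_pos_left step2s ham
          linarith
        calc (1 - x * t)⁻¹ ^ a ≤ _ := step1
          _ < _ := this
          _ = P + Q * (1 - t)⁻¹ := by rw [hP_def, hQ_def]; ring
      have := mul_pos hw (sub_pos.mpr chains)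
      linarith [hHG]
  -- integrability
  have hItail : IntegrableOn (fun t : ℝ => t ^ (b - 1) * (1 - t) ^ (c - b - 1)) (Set.Ioo (0:ℝ) 1) :=
    betaIntegrand_intOn hb (by linarith : (0:ℝ) < c - b)
  have I2 : IntegrableOn (fun t : ℝ => t ^ (b - 1) * (1 - t) ^ (c - b - 1 - 1)) (Set.Ioo (0:ℝ) 1) :=
    betaIntegrand_intOn hb he0
  have IH : IntegrableOn H (Set.Ioo (0:ℝ) 1) := by
    rw [hH_def]
    exact (hItail.const_mul P).add (I2.const_mul Q)
  have h1x : (0:ℝ) < 1 - x := by linarith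
  have IG : IntegrableOn G (Set.Ioo (0:ℝ) 1) := by
    rw [hG_def]
    apply Integrable.mono (hItail.const_mul ((1 - x) ^ (-a)))
    · exact (by fun_prop : Measurable fun t : ℝ =>
        t ^ (b - 1) * (1 - t) ^ (c - b - 1) * (1 - x * t) ^ (-a)).aestronglyMeasurable
    · filter_upwards [ae_restrict_mem measurableSet_Ioo] with t ht
      obtain ⟨ht0, ht1⟩ := ht
      have h1t : (0:ℝ) < 1 - t := by linarith
      have hxt : (0:ℝ) < 1 - x * t := by nlinarith
      have hw : (0:ℝ) ≤ t ^ (b - 1) * (1 - t) ^ (c - b - 1) :=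
        mul_nonneg (Real.rpow_nonneg ht0.le _) (Real.rpow_nonneg h1t.le _)
      have hvb : (1 - x * t) ^ (-a) ≤ (1 - x) ^ (-a) :=
        Real.rpow_le_rpow_of_nonpos h1x (by nlinarith) (by linarith)
      rw [Real.norm_eq_abs, Real.norm_eq_abs,
        abs_of_nonneg (mul_nonneg hw (Real.rpow_nonneg hxt.le _)),
        abs_of_nonneg (mul_nonneg (Real.rpow_nonneg h1x.le _) hw)]
      calc t ^ (b - 1) * (1 - t) ^ (c - b - 1) * (1 - x * t) ^ (-a)
          ≤ t ^ (b - 1) * (1 - t) ^ (c - b - 1) * (1 - x) ^ (-a) :=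
            mul_le_mul_of_nonneg_left hvb hw
        _ = (1 - x) ^ (-a) * (t ^ (b - 1) * (1 - t) ^ (c - b - 1)) := by ring
  -- strict integral inequality
  have hFnonneg : 0 ≤ᵐ[volume.restrict (Set.Ioo (0:ℝ) 1)] fun t => H t - G t := by
    filter_upwards [ae_restrict_mem measurableSet_Ioo] with t ht
    exact sub_nonneg.mpr ((key t ht).1)
  have hsupp : 0 < volume (Function.support (fun t => H t - G t) ∩ Set.Ioo (0:ℝ) 1) := by
    have hsub : Set.Ioo (0:ℝ) 1 \ {1 - ρ⁻¹}
        ⊆ Function.support (fun t => H t - G t) ∩ Set.Ioo (0:ℝ) 1 := by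
      rintro t ⟨ht, htne⟩
      refine ⟨?_, ht⟩
      have hlt := (key t ht).2 (by simpa using htne)
      exact ne_of_gt (sub_pos.mpr hlt)
    calc (0:ENNReal) < volume (Set.Ioo (0:ℝ) 1 \ {1 - ρ⁻¹}) := by
          rw [measure_diff_null (measure_singleton _)]
          simp
      _ ≤ _ := measure_mono hsub
  have hlt : (∫ t in Set.Ioo (0:ℝ) 1, G t) < ∫ t in Set.Ioo (0:ℝ) 1, H t := by
    have h0 : 0 < ∫ t in Set.Ioo (0:ℝ) 1, (H t - G t) :=
      (setIntegral_pos_iff_support_of_nonneg_ae hFnonneg (IH.sub IG)).2 hsupp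
    rw [integral_sub IH IG] at h0
    linarith
  -- integral values
  have hHint : (∫ t in Set.Ioo (0:ℝ) 1, H t)
      = P * betaB b (c - b) + Q * betaB b (c - b - 1) := by
    rw [hH_def, integral_add (hItail.const_mul P) (I2.const_mul Q),
      integral_const_mul, integral_const_mul, betaB_eq_Ioo, betaB_eq_Ioo]
  have hGint : gaussF a b c x = (betaB b (c - b))⁻¹ * ∫ t in Set.Ioo (0:ℝ) 1, G t := by
    rw [gaussF, hG_def, intervalIntegral.integral_of_le (by norm_num : (0:ℝ) ≤ 1),
      integral_Ioc_eq_integral_Ioo]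
  have hB1 : 0 < betaB b (c - b) := betaB_pos hb (by linarith)
  have hrec : betaB b (c - b - 1) = ρ * betaB b (c - b) := by
    have h := betaB_rec hb (show (1:ℝ) < c - b from hcb1)
    rw [hρ_def, he_def, eq_comm, div_mul_eq_mul_div, div_eq_iff (ne_of_gt he0)]
    linear_combination h
  have hPQ : P + Q * ρ = m ^ a := by
    have hαβρ : α + β * ρ = m := by
      rw [hα_def, hβ_def, hρ_def, hm_def]
      field_simp [hd.ne', he.ne']
      rw [hd_def, he_def]
      ring
    rw [hP_def, hQ_def]
    linear_combination (a * m ^ (a - 1)) * hαβρ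
  have hfinal : (∫ t in Set.Ioo (0:ℝ) 1, H t) = betaB b (c - b) * m ^ a := by
    rw [hHint, hrec]
    linear_combination betaB b (c - b) * hPQ
  have hgoal_m : (1 - b / (c - 1) * x) ^ (-a) = m ^ a := by
    have hc1' : (0:ℝ) < c - 1 := by linarith
    have h1 : 1 - b / (c - 1) * x = d / (c - 1) := by
      rw [hd_def]
      field_simp
    rw [h1, Real.rpow_neg (div_pos hd hc1').le, ← Real.inv_rpow (div_pos hd hc1').le,
      inv_div, hm_def]
  rw [hgoal_m, hGint]
  calc (betaB b (c - b))⁻¹ * ∫ t in Set.Ioo (0:ℝ) 1, G t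
      < (betaB b (c - b))⁻¹ * ∫ t in Set.Ioo (0:ℝ) 1, H t :=
        mul_lt_mul_of_pos_left hlt (inv_pos.mpr hB1)
    _ = m ^ a := by
        rw [hfinal, ← mul_assoc, inv_mul_cancel₀ (ne_of_gt hB1), one_mul]
end

section
/- For c > b > 1, x > 0, and 0 < a ≤ 1, the Gauss hypergeometric function satisfies F(a,b,c;-x) < (1 + x(b-1)/(c-1))^{-a}. -/
open MeasureTheory Set intervalIntegral

lemma aux_wInt {b c : ℝ} (hb : 1 < b) (hcb : b < c) :
    IntervalIntegrable (fun t : ℝ => t ^ (b-1) * (1-t) ^ (c-b-1)) volume 0 1 := by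
  have h0 : IntervalIntegrable (fun t : ℝ => t ^ (c-b-1)) volume 0 1 :=
    intervalIntegrable_rpow' (by linarith)
  have h1 : IntervalIntegrable (fun t : ℝ => (1-t) ^ (c-b-1)) volume 0 1 := by
    have := h0.comp_sub_left 1
    simpa using this.symm
  have h2 : ContinuousOn (fun t : ℝ => t ^ (b-1)) (uIcc (0:ℝ) 1) :=
    continuousOn_id.rpow_const (fun t _ => Or.inr (by linarith))
  exact h1.continuousOn_mul h2

-- key: ∫ w(t) (t - m)/(1+xt) dt > 0 where m = (b-1)/(c-1)
lemma aux_J_pos {b c x : ℝ} (hb : 1 < b) (hcb : b < c) (hx : 0 < x) :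
    0 < ∫ t in (0:ℝ)..1, (t ^ (b-1) * (1-t) ^ (c-b-1)) * ((t - (b-1)/(c-1)) / (1+x*t)) := by
  have hc1 : (0:ℝ) < c - 1 := by linarith
  have hden : ∀ t ∈ Icc (0:ℝ) 1, 0 < 1 + x * t := fun t ht => by nlinarith [ht.1]
  have hIcc : uIcc (0:ℝ) 1 = Icc 0 1 := uIcc_of_le zero_le_one
  -- continuity facts on Icc 0 1
  have cden : ContinuousOn (fun t : ℝ => 1 + x*t) (Icc 0 1) :=
    (continuous_const.add (continuous_const.mul continuous_id)).continuousOn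
  have cq : ContinuousOn (fun t : ℝ => t ^ (b-1) * (1-t) ^ (c-b)) (Icc 0 1) := by
    apply ContinuousOn.mul
    · exact continuousOn_id.rpow_const (fun t _ => Or.inr (by linarith))
    · exact (continuous_const.sub continuous_id).continuousOn.rpow_const
        (fun t _ => Or.inr (by linarith))
  -- the function H and its derivative H'
  set H : ℝ → ℝ := fun t => (t ^ (b-1) * (1-t) ^ (c-b)) * (t / (1+x*t)) with hH
  set H' : ℝ → ℝ := fun t =>
      (t ^ (b-1) * (1-t) ^ (c-b-1)) * ((b - 1 - (c-1)*t) / (1+x*t))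
      + (t ^ (b-1) * (1-t) ^ (c-b)) / (1+x*t)^2 with hH'
  have hderiv : ∀ t ∈ Ioo (0:ℝ) 1, HasDerivAt H (H' t) t := by
    intro t ht
    have ht0 : (0:ℝ) < t := ht.1
    have ht1 : (0:ℝ) < 1 - t := by linarith [ht.2]
    have hdpos : (0:ℝ) < 1 + x*t := by nlinarith
    have hd1 : HasDerivAt (fun s : ℝ => s ^ (b-1)) ((b-1) * t ^ (b-1-1)) t :=
      Real.hasDerivAt_rpow_const (Or.inl ht0.ne')
    have hd2 : HasDerivAt (fun s : ℝ => (1-s) ^ (c-b)) (((c-b) * (1-t) ^ (c-b-1)) * (-1)) t := by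
      have inner : HasDerivAt (fun s : ℝ => 1 - s) (-1) t := by
        simpa using (hasDerivAt_id t).const_sub 1
      exact (Real.hasDerivAt_rpow_const (x := 1-t) (p := c-b) (Or.inl ht1.ne')).comp t inner
    have hdq := hd1.mul hd2
    have hdr : HasDerivAt (fun s : ℝ => s / (1+x*s))
        ((1 * (1+x*t) - t * x) / (1+x*t)^2) t := by
      have hden' : HasDerivAt (fun s : ℝ => 1 + x*s) x t := by
        simpa using ((hasDerivAt_id t).const_mul x).const_add 1
      exact (hasDerivAt_id t).div hden' hdpos.ne'
    have total := hdq.mul hdr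
    convert total using 1
    case e'_4 => rfl
    case e'_5 => rfl
    case e'_8 => rfl
    have e1 : t ^ (b-1) = t ^ (b-1-1) * t := by
      rw [← Real.rpow_add_one ht0.ne' (b-1-1)]; congr 1; ring
    have e2 : (1-t) ^ (c-b) = (1-t) ^ (c-b-1) * (1-t) := by
      rw [← Real.rpow_add_one ht1.ne' (c-b-1)]; congr 1; ring
    rw [hH']
    dsimp only [Pi.mul_apply]
    rw [e1, e2]
    generalize t ^ (b-1-1) = A
    generalize (1-t) ^ (c-b-1) = B
    field_simp
    ring
  have hContH : ContinuousOn H (Icc 0 1) := by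
    apply cq.mul
    exact (continuousOn_id.div cden (fun t ht => (hden t ht).ne'))
  -- integrability of the two parts of H'
  have hint1 : IntervalIntegrable
      (fun t : ℝ => (t ^ (b-1) * (1-t) ^ (c-b-1)) * ((b - 1 - (c-1)*t) / (1+x*t)))
      volume 0 1 := by
    apply (aux_wInt hb hcb).mul_continuousOn
    rw [hIcc]
    exact ((continuous_const.sub (continuous_const.mul continuous_id)).continuousOn).div cden
      (fun t ht => (hden t ht).ne')
  have hint2 : IntervalIntegrable
      (fun t : ℝ => (t ^ (b-1) * (1-t) ^ (c-b)) / (1+x*t)^2) volume 0 1 := by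
    apply ContinuousOn.intervalIntegrable
    rw [hIcc]
    exact cq.div (cden.pow 2) (fun t ht => pow_ne_zero _ (hden t ht).ne')
  -- FTC: integral of H' over [0,1] is H 1 - H 0 = 0
  have hH0 : H 0 = 0 := by
    simp [hH, Real.zero_rpow (show b - 1 ≠ 0 by linarith)]
  have hH1 : H 1 = 0 := by
    simp [hH, Real.zero_rpow (show c - b ≠ 0 by linarith)]
  have hFTC : (∫ t in (0:ℝ)..1, H' t) = 0 := by
    rw [integral_eq_sub_of_hasDeriv_right_of_le zero_le_one hContH
      (fun t ht => (hderiv t ht).hasDerivWithinAt)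
      (by rw [hH']; exact hint1.add hint2), hH0, hH1, sub_zero]
  have hsplit : (∫ t in (0:ℝ)..1, (t ^ (b-1) * (1-t) ^ (c-b-1)) * ((b - 1 - (c-1)*t) / (1+x*t)))
      + (∫ t in (0:ℝ)..1, (t ^ (b-1) * (1-t) ^ (c-b)) / (1+x*t)^2) = 0 := by
    rw [← integral_add hint1 hint2]
    exact hFTC
  have hpos2 : 0 < ∫ t in (0:ℝ)..1, (t ^ (b-1) * (1-t) ^ (c-b)) / (1+x*t)^2 := by
    apply intervalIntegral_pos_of_pos_on hint2
    · intro t ht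
      have h1 : 0 < t ^ (b-1) := Real.rpow_pos_of_pos ht.1 _
      have h2 : 0 < (1-t) ^ (c-b) := Real.rpow_pos_of_pos (by linarith [ht.2]) _
      have hd : (0:ℝ) < 1 + x*t := by nlinarith [mul_pos hx ht.1]
      have h3 : (0:ℝ) < (1+x*t)^2 := pow_pos hd 2
      exact div_pos (mul_pos h1 h2) h3
    · exact zero_lt_one
  -- now relate the first integral to J
  have hrel : (∫ t in (0:ℝ)..1, (t ^ (b-1) * (1-t) ^ (c-b-1)) * ((b - 1 - (c-1)*t) / (1+x*t)))
      = (-(c-1)) * ∫ t in (0:ℝ)..1, (t ^ (b-1) * (1-t) ^ (c-b-1)) * ((t - (b-1)/(c-1)) / (1+x*t)) := by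
    rw [← intervalIntegral.integral_const_mul]
    apply integral_congr
    intro t _
    have h : b - 1 - (c-1)*t = (-(c-1)) * (t - (b-1)/(c-1)) := by
      field_simp; ring
    dsimp only
    rw [h]
    ring
  rw [hrel] at hsplit
  have hc1' : (0:ℝ) < c - 1 := hc1
  nlinarith [hsplit, hpos2]

theorem stmt6 (a b c x : ℝ) (hcb : c > b) (hb : b > 1) (hx : 0 < x)
    (ha0 : 0 < a) (ha1 : a ≤ 1) :
    gaussF a b c (-x) < (1 + x * (b - 1) / (c - 1)) ^ (-a) := by
  have hc1 : (0:ℝ) < c - 1 := by linarith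
  have hIcc : Set.uIcc (0:ℝ) 1 = Set.Icc 0 1 := Set.uIcc_of_le zero_le_one
  have hden : ∀ t ∈ Set.Icc (0:ℝ) 1, 0 < 1 + x * t := fun t ht => by nlinarith [ht.1]
  have cden : ContinuousOn (fun t : ℝ => 1 + x*t) (Set.Icc 0 1) :=
    (continuous_const.add (continuous_const.mul continuous_id)).continuousOn
  have cg : ContinuousOn (fun t : ℝ => (1+x*t)⁻¹) (Set.Icc 0 1) :=
    cden.inv₀ (fun t ht => (hden t ht).ne')
  have wInt := aux_wInt hb hcb
  set m : ℝ := (b-1)/(c-1) with hm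
  have hmpos : 0 < m := div_pos (by linarith) hc1
  have h1xm : (0:ℝ) < 1 + x*m := by positivity
  set B : ℝ := ∫ t in (0:ℝ)..1, t ^ (b-1) * (1-t) ^ (c-b-1) with hB
  have hBpos : 0 < B := by
    apply intervalIntegral_pos_of_pos_on wInt _ zero_lt_one
    intro t ht
    exact mul_pos (Real.rpow_pos_of_pos ht.1 _) (Real.rpow_pos_of_pos (by linarith [ht.2]) _)
  have hgInt : IntervalIntegrable
      (fun t : ℝ => (t ^ (b-1) * (1-t) ^ (c-b-1)) * (1+x*t)⁻¹) volume 0 1 :=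
    wInt.mul_continuousOn (by rw [hIcc]; exact cg)
  set I1 : ℝ := ∫ t in (0:ℝ)..1, (t ^ (b-1) * (1-t) ^ (c-b-1)) * (1+x*t)⁻¹ with hI1
  have hI1pos : 0 < I1 := by
    apply intervalIntegral_pos_of_pos_on hgInt _ zero_lt_one
    intro t ht
    have := hden t (Set.mem_Icc.2 ⟨ht.1.le, ht.2.le⟩)
    exact mul_pos (mul_pos (Real.rpow_pos_of_pos ht.1 _)
      (Real.rpow_pos_of_pos (by linarith [ht.2]) _)) (inv_pos.2 this)
  -- Step B : (1+x*m) * I1 < B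
  have hJ := aux_J_pos hb hcb hx
  have heq : B - (1+x*m)*I1
      = x * ∫ t in (0:ℝ)..1, (t ^ (b-1) * (1-t) ^ (c-b-1)) * ((t - (b-1)/(c-1)) / (1+x*t)) := by
    have e1 : (1+x*m) * I1
        = ∫ t in (0:ℝ)..1, (1+x*m) * ((t ^ (b-1) * (1-t) ^ (c-b-1)) * (1+x*t)⁻¹) := by
      rw [hI1, intervalIntegral.integral_const_mul]
    have e2 : (x * ∫ t in (0:ℝ)..1, (t ^ (b-1) * (1-t) ^ (c-b-1)) * ((t - (b-1)/(c-1)) / (1+x*t)))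
        = ∫ t in (0:ℝ)..1, x * ((t ^ (b-1) * (1-t) ^ (c-b-1)) * ((t - (b-1)/(c-1)) / (1+x*t))) := by
      rw [intervalIntegral.integral_const_mul]
    rw [e1, e2, hB, ← integral_sub wInt (hgInt.const_mul _)]
    apply integral_congr
    intro t ht
    rw [hIcc] at ht
    have hd := hden t ht
    dsimp only
    rw [hm]
    linear_combination (-(t ^ (b-1) * (1-t) ^ (c-b-1))) * (mul_inv_cancel₀ hd.ne')
  have hkey : (1+x*m) * I1 < B := by nlinarith [mul_pos hx hJ]
  set M : ℝ := I1 / B with hMdef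
  have hM : 0 < M := div_pos hI1pos hBpos
  have hMB : M * B = I1 := div_mul_cancel₀ _ hBpos.ne'
  have hMlt : M < (1+x*m)⁻¹ := by
    rw [hMdef, div_lt_iff₀ hBpos, inv_mul_eq_div, lt_div_iff₀ h1xm]
    nlinarith [hkey]
  -- Jensen step
  have hMa1 : (0:ℝ) ≤ M ^ (a-1) := (Real.rpow_pos_of_pos hM _).le
  have hMsum : M ^ (1-a) * M ^ (a-1) = 1 := by
    rw [← Real.rpow_add hM]; norm_num
  have hMaa : M ^ a = M ^ (a-1) * M := by
    rw [← Real.rpow_add_one hM.ne' (a-1)]; congr 1; ring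
  have hfa : IntervalIntegrable
      (fun t : ℝ => (t ^ (b-1) * (1-t) ^ (c-b-1)) * (1+x*t) ^ (-a)) volume 0 1 := by
    apply wInt.mul_continuousOn
    rw [hIcc]
    exact cden.rpow_const (fun t ht => Or.inl (hden t ht).ne')
  have hmono : (∫ t in (0:ℝ)..1, (t ^ (b-1) * (1-t) ^ (c-b-1)) * (1+x*t) ^ (-a))
      ≤ ∫ t in (0:ℝ)..1, ((a * M^(a-1)) * ((t ^ (b-1) * (1-t) ^ (c-b-1)) * (1+x*t)⁻¹)
          + ((1-a) * M * M^(a-1)) * (t ^ (b-1) * (1-t) ^ (c-b-1))) := by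
    apply integral_mono_on zero_le_one hfa ((hgInt.const_mul _).add (wInt.const_mul _))
    intro t ht
    have hd := hden t ht
    have hwnn : (0:ℝ) ≤ t ^ (b-1) * (1-t) ^ (c-b-1) := by
      have := ht.1
      have h2 : (0:ℝ) ≤ 1 - t := by linarith [ht.2]
      positivity
    set u : ℝ := (1+x*t)⁻¹ with hu
    have hunn : (0:ℝ) ≤ u := inv_nonneg.2 hd.le
    have hg : u ^ a * M ^ (1-a) ≤ a * u + (1-a) * M :=
      Real.geom_mean_le_arith_mean2_weighted ha0.le (by linarith) hunn hM.le (by ring)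
    have hua : (1+x*t) ^ (-a) = u ^ a := by
      rw [hu, Real.inv_rpow hd.le, ← Real.rpow_neg hd.le]
    rw [hua]
    have lhs_eq : (t ^ (b-1) * (1-t) ^ (c-b-1)) * u ^ a
        = (t ^ (b-1) * (1-t) ^ (c-b-1)) * ((u^a * M^(1-a)) * M^(a-1)) := by
      rw [show (u^a * M^(1-a)) * M^(a-1) = u^a * (M^(1-a) * M^(a-1)) by ring, hMsum, mul_one]
    rw [lhs_eq]
    calc (t ^ (b-1) * (1-t) ^ (c-b-1)) * ((u^a * M^(1-a)) * M^(a-1))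
        ≤ (t ^ (b-1) * (1-t) ^ (c-b-1)) * ((a*u + (1-a)*M) * M^(a-1)) :=
          mul_le_mul_of_nonneg_left (mul_le_mul_of_nonneg_right hg hMa1) hwnn
      _ = (a * M^(a-1)) * ((t ^ (b-1) * (1-t) ^ (c-b-1)) * u)
          + ((1-a) * M * M^(a-1)) * (t ^ (b-1) * (1-t) ^ (c-b-1)) := by ring
  have hRHSval : (∫ t in (0:ℝ)..1, ((a * M^(a-1)) * ((t ^ (b-1) * (1-t) ^ (c-b-1)) * (1+x*t)⁻¹)
          + ((1-a) * M * M^(a-1)) * (t ^ (b-1) * (1-t) ^ (c-b-1)))) = M ^ a * B := by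
    rw [integral_add (hgInt.const_mul _) (wInt.const_mul _), intervalIntegral.integral_const_mul,
      intervalIntegral.integral_const_mul, ← hI1, ← hB, ← hMB, hMaa]
    ring
  rw [hRHSval] at hmono
  -- final chain
  have hgauss : gaussF a b c (-x) = B⁻¹ * ∫ t in (0:ℝ)..1,
      (t ^ (b-1) * (1-t) ^ (c-b-1)) * (1+x*t) ^ (-a) := by
    rw [gaussF, betaB]
    congr 1
    apply integral_congr
    intro t _
    show t ^ (b-1) * (1-t) ^ (c-b-1) * (1 - -x*t) ^ (-a)
        = t ^ (b-1) * (1-t) ^ (c-b-1) * (1+x*t) ^ (-a)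
    rw [show (1:ℝ) - -x*t = 1+x*t by ring]
  have hle : gaussF a b c (-x) ≤ M ^ a := by
    rw [hgauss]
    calc B⁻¹ * (∫ t in (0:ℝ)..1, (t ^ (b-1) * (1-t) ^ (c-b-1)) * (1+x*t) ^ (-a))
        ≤ B⁻¹ * (M ^ a * B) := by
          apply mul_le_mul_of_nonneg_left hmono (inv_nonneg.2 hBpos.le)
      _ = M ^ a := by field_simp
  have hlt : M ^ a < (1 + x*m) ^ (-a) := by
    calc M ^ a < ((1 + x*m)⁻¹) ^ a := Real.rpow_lt_rpow hM.le hMlt ha0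
      _ = (1 + x*m) ^ (-a) := by rw [Real.inv_rpow h1xm.le, ← Real.rpow_neg h1xm.le]
  have : gaussF a b c (-x) < (1 + x*m) ^ (-a) := lt_of_le_of_lt hle hlt
  rwa [hm, ← mul_div_assoc] at this
end

section
/- For c > b > 0 and x < 1, the Gauss hypergeometric function satisfies the Pfaff transformation F(a,b,c;x) = (1-x)^{-a} F(a, c-b, c; x/(x-1)), where both sides are given by the Euler integral representation. -/
open MeasureTheory

/-! The substitution `t ↦ 1 - t` swaps the two beta exponents and turns `1 - x t` into
`(1 - x) (1 - x/(x-1) · t)`, which pulls the factor `(1 - x)^(-a)` out of the Euler integral. -/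

theorem intervalIntegral_comp_one_sub_unit (f : ℝ → ℝ) :
    ∫ t in (0:ℝ)..1, f (1 - t) = ∫ t in (0:ℝ)..1, f t := by
  simp [intervalIntegral.integral_comp_sub_left]

theorem betaB_comm (a b : ℝ) : betaB a b = betaB b a := by
  rw [betaB, ← intervalIntegral_comp_one_sub_unit, betaB]
  simp only [sub_sub_cancel, mul_comm]

theorem one_sub_mul_pos {x t : ℝ} (hx : x < 1) (ht : t ∈ Set.Icc (0:ℝ) 1) : 0 < 1 - x * t := by
  obtain ⟨ht0, ht1⟩ := ht
  rcases le_or_gt x 0 with h0 | h0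
  · nlinarith [mul_nonneg (neg_nonneg.2 h0) ht0]
  · nlinarith [mul_le_mul_of_nonneg_left ht1 h0.le]

theorem one_sub_mul_eq_pfaff {x : ℝ} (hx : x < 1) (t : ℝ) :
    1 - x * (1 - t) = (1 - x) * (1 - x / (x - 1) * t) := by
  have : x - 1 ≠ 0 := sub_ne_zero_of_ne hx.ne
  field_simp
  ring

theorem rpow_one_sub_mul_eq_pfaff {x t : ℝ} (s : ℝ) (hx : x < 1) (ht : t ∈ Set.Icc (0:ℝ) 1) :
    (1 - x * (1 - t)) ^ s = (1 - x) ^ s * (1 - x / (x - 1) * t) ^ s := by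
  have hpos : 0 < 1 - x * (1 - t) :=
    one_sub_mul_pos hx ⟨sub_nonneg.2 ht.2, by linarith [ht.1]⟩
  have hx1 : 0 < 1 - x := by linarith
  rw [one_sub_mul_eq_pfaff hx] at hpos ⊢
  exact Real.mul_rpow hx1.le (nonneg_of_mul_nonneg_right hpos.le hx1)

theorem eulerIntegral_pfaff (a b c : ℝ) {x : ℝ} (hx : x < 1) :
    ∫ t in (0:ℝ)..1, t ^ (b - 1) * (1 - t) ^ (c - b - 1) * (1 - x * t) ^ (-a) =
      (1 - x) ^ (-a) *
        ∫ t in (0:ℝ)..1, t ^ (c - b - 1) * (1 - t) ^ (b - 1) * (1 - x / (x - 1) * t) ^ (-a) := by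
  rw [← intervalIntegral_comp_one_sub_unit, ← intervalIntegral.integral_const_mul]
  refine intervalIntegral.integral_congr fun t ht => ?_
  rw [Set.uIcc_of_le zero_le_one] at ht
  simp only [sub_sub_cancel, rpow_one_sub_mul_eq_pfaff (-a) hx ht]
  ring

theorem stmt7_general (a b c x : ℝ) (hx : x < 1) :
    gaussF a b c x = (1 - x) ^ (-a) * gaussF a (c - b) c (x / (x - 1)) := by
  rw [gaussF, gaussF, sub_sub_cancel, betaB_comm (c - b) b, eulerIntegral_pfaff a b c hx]
  ring

theorem stmt7 (a b c x : ℝ) (hcb : c > b) (hb : b > 0) (hx : x < 1) :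
    gaussF a b c x = (1 - x) ^ (-a) * gaussF a (c - b) c (x / (x - 1)) :=
  stmt7_general a b c x hx
end

section
/- Let 1/2 ≤ H₁ < H₂ < 1. For all x ∈ (0,1), x^{1-H₂+H₁} · F(H₁-H₂+1, 3/2-H₁, 2-H₁+H₂; x) ≤ ((1-H₁+H₂)/(H₂-1/2))^{H₁-H₂+1}, where F is the Gauss hypergeometric function. -/
open MeasureTheory

/-!
Since `x (1 - t) ≤ 1 - x t`, the factor `x^a (1 - x t)^(-a)` of the Euler integrand is at most
`(1 - t)^(-a)`, so `x^a B(b, c - b) F(a, b, c; x) ≤ B(b, c - b - a)`. Hölder's inequality makes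
`q ↦ B(b, q)` log-convex, whence `B(b, c - b - a) ≤ B(b, c - b - 1)^a B(b, c - b)^(1 - a)`, and the
recurrence `B(b, q) = (b + q)/q · B(b, q + 1)` at `q = c - b - 1` turns the right-hand side into
`((c - 1)/(c - b - 1))^a B(b, c - b)`.
-/

open Set ProbabilityTheory

lemma lintegral_ofReal_beta_integrand {p q : ℝ} (hp : 0 < p) (hq : 0 < q) :
    ∫⁻ t in Ioo 0 1, ENNReal.ofReal (t ^ (p - 1) * (1 - t) ^ (q - 1)) =
      ENNReal.ofReal (beta p q) := by
  have h := lintegral_betaPDF_eq_one hp hq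
  have hB := beta_pos hp hq
  simp_rw [lintegral_betaPDF, mul_assoc, ENNReal.ofReal_mul (one_div_pos.2 hB).le,
    lintegral_const_mul' _ _ ENNReal.ofReal_ne_top, one_div, ENNReal.ofReal_inv_of_pos hB] at h
  rw [mul_comm] at h
  exact (ENNReal.eq_inv_of_mul_eq_one_left h).trans (inv_inv _)

lemma ae_beta_integrand_nonneg (p q : ℝ) :
    0 ≤ᵐ[volume.restrict (Ioo (0:ℝ) 1)] fun t : ℝ ↦ t ^ (p - 1) * (1 - t) ^ (q - 1) :=
  ae_restrict_of_forall_mem measurableSet_Ioo fun _ ht ↦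
    mul_nonneg (Real.rpow_nonneg ht.1.le _) (Real.rpow_nonneg (sub_nonneg.2 ht.2.le) _)

lemma integrableOn_beta_integrand {p q : ℝ} (hp : 0 < p) (hq : 0 < q) :
    IntegrableOn (fun t : ℝ ↦ t ^ (p - 1) * (1 - t) ^ (q - 1)) (Ioo 0 1) := by
  refine ⟨by fun_prop, ?_⟩
  rw [hasFiniteIntegral_iff_ofReal (ae_beta_integrand_nonneg p q),
    lintegral_ofReal_beta_integrand hp hq]
  exact ENNReal.ofReal_lt_top

lemma betaB_eq_setIntegral (p q : ℝ) :
    betaB p q = ∫ t in Ioo 0 1, t ^ (p - 1) * (1 - t) ^ (q - 1) := by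
  rw [betaB, intervalIntegral.integral_of_le zero_le_one, integral_Ioc_eq_integral_Ioo]

lemma betaB_eq_beta {p q : ℝ} (hp : 0 < p) (hq : 0 < q) : betaB p q = beta p q := by
  rw [betaB_eq_setIntegral, integral_eq_lintegral_of_nonneg_ae
    (ae_beta_integrand_nonneg p q) (by fun_prop), lintegral_ofReal_beta_integrand hp hq,
    ENNReal.toReal_ofReal (beta_pos hp hq).le]

lemma beta_add_one_right {p q : ℝ} (hp : 0 < p) (hq : 0 < q) :
    beta p (q + 1) = q / (p + q) * beta p q := by
  have hpq : p + q ≠ 0 := by positivity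
  rw [beta, beta, ← add_assoc, Real.Gamma_add_one hq.ne', Real.Gamma_add_one hpq]
  field_simp

lemma rpow_rpow_mul_rpow_rpow {t r s u v : ℝ} (ht : 0 < t) :
    (t ^ r) ^ u * (t ^ s) ^ v = t ^ (r * u + s * v) := by
  rw [← Real.rpow_mul ht.le, ← Real.rpow_mul ht.le, ← Real.rpow_add ht]

lemma beta_mul_add_mul_le_rpow_beta_mul_rpow_beta {b p q u v : ℝ} (hb : 0 < b) (hp : 0 < p)
    (hq : 0 < q) (hu : 0 ≤ u) (hv : 0 ≤ v) (huv : u + v = 1) :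
    beta b (u * p + v * q) ≤ beta b p ^ u * beta b q ^ v := by
  have hpq : 0 < u * p + v * q := convex_Ioi (0 : ℝ) hp hq hu hv huv
  have key : ∀ t ∈ Ioo (0:ℝ) 1, ENNReal.ofReal (t ^ (b - 1) * (1 - t) ^ (u * p + v * q - 1)) =
      ENNReal.ofReal (t ^ (b - 1) * (1 - t) ^ (p - 1)) ^ u *
        ENNReal.ofReal (t ^ (b - 1) * (1 - t) ^ (q - 1)) ^ v := by
    rintro t ⟨ht0, ht1⟩
    have ht1' : 0 < 1 - t := sub_pos.2 ht1
    rw [ENNReal.ofReal_rpow_of_nonneg (by positivity) hu,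
      ENNReal.ofReal_rpow_of_nonneg (by positivity) hv, ← ENNReal.ofReal_mul (by positivity),
      Real.mul_rpow (by positivity) (by positivity), Real.mul_rpow (by positivity) (by positivity),
      mul_mul_mul_comm, rpow_rpow_mul_rpow_rpow ht0, rpow_rpow_mul_rpow_rpow ht1']
    congr 3
    · linear_combination (1 - b) * huv
    · linear_combination huv
  rw [← ENNReal.ofReal_le_ofReal_iff (by positivity [beta_pos hb hp, beta_pos hb hq]),
    ENNReal.ofReal_mul (by positivity [beta_pos hb hp]),
    ← ENNReal.ofReal_rpow_of_nonneg (beta_pos hb hp).le hu,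
    ← ENNReal.ofReal_rpow_of_nonneg (beta_pos hb hq).le hv,
    ← lintegral_ofReal_beta_integrand hb hpq, ← lintegral_ofReal_beta_integrand hb hp,
    ← lintegral_ofReal_beta_integrand hb hq, setLIntegral_congr_fun measurableSet_Ioo key]
  exact ENNReal.lintegral_mul_norm_pow_le (by fun_prop) (by fun_prop) hu hv huv

lemma rpow_mul_one_sub_mul_rpow_neg_le {a x t : ℝ} (ha : 0 ≤ a) (hx0 : 0 ≤ x) (hx1 : x ≤ 1)
    (ht0 : 0 ≤ t) (ht1 : t < 1) : x ^ a * (1 - x * t) ^ (-a) ≤ (1 - t) ^ (-a) := by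
  have h1t : 0 < 1 - t := sub_pos.2 ht1
  have h1xt : 0 < 1 - x * t := by nlinarith
  rw [Real.rpow_neg h1xt.le, Real.rpow_neg h1t.le, ← Real.inv_rpow h1xt.le,
    ← Real.inv_rpow h1t.le, ← Real.mul_rpow hx0 (inv_nonneg.2 h1xt.le)]
  refine Real.rpow_le_rpow (by positivity) ?_ ha
  rw [← div_eq_mul_inv, div_le_iff₀ h1xt, ← div_eq_inv_mul, le_div_iff₀ h1t]
  nlinarith

lemma rpow_mul_integral_le_beta {a b β x : ℝ} (ha : 0 ≤ a) (hb : 0 < b) (haβ : a < β)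
    (hx0 : 0 ≤ x) (hx1 : x ≤ 1) :
    x ^ a * ∫ t in (0:ℝ)..1, t ^ (b - 1) * (1 - t) ^ (β - 1) * (1 - x * t) ^ (-a) ≤
      beta b (β - a) := by
  rw [intervalIntegral.integral_of_le zero_le_one, integral_Ioc_eq_integral_Ioo,
    ← integral_const_mul, ← betaB_eq_beta hb (sub_pos.2 haβ), betaB_eq_setIntegral]
  refine integral_mono_of_nonneg ?_ (integrableOn_beta_integrand hb (sub_pos.2 haβ)) ?_
  all_goals refine ae_restrict_of_forall_mem measurableSet_Ioo fun t ⟨ht0, ht1⟩ ↦ ?_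
  · have h1xt : 0 < 1 - x * t := by nlinarith
    have h1t : 0 < 1 - t := sub_pos.2 ht1
    positivity
  · have h1t : 0 < 1 - t := sub_pos.2 ht1
    calc x ^ a * (t ^ (b - 1) * (1 - t) ^ (β - 1) * (1 - x * t) ^ (-a))
        = t ^ (b - 1) * (1 - t) ^ (β - 1) * (x ^ a * (1 - x * t) ^ (-a)) := by ring
      _ ≤ t ^ (b - 1) * (1 - t) ^ (β - 1) * (1 - t) ^ (-a) := by
        gcongr
        exact rpow_mul_one_sub_mul_rpow_neg_le ha hx0 hx1 ht0.le ht1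
      _ = t ^ (b - 1) * (1 - t) ^ (β - a - 1) := by
        rw [mul_assoc, ← Real.rpow_add h1t, sub_add_eq_add_sub, ← sub_eq_add_neg]

theorem rpow_mul_gaussF_le {a b c x : ℝ} (ha0 : 0 ≤ a) (ha1 : a ≤ 1) (hb : 0 < b)
    (hcb : 1 < c - b) (hx0 : 0 ≤ x) (hx1 : x ≤ 1) :
    x ^ a * gaussF a b c x ≤ ((c - 1) / (c - b - 1)) ^ a := by
  have hβ : 0 < c - b := by linarith
  have hβ1 : 0 < c - b - 1 := by linarith
  have hB := beta_pos hb hβ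
  have hrec : beta b (c - b - 1) = (c - 1) / (c - b - 1) * beta b (c - b) := by
    have h := beta_add_one_right hb hβ1
    rw [sub_add_cancel] at h
    rw [h]
    field_simp
    ring
  have hlogconv : beta b (c - b - a) ≤ beta b (c - b - 1) ^ a * beta b (c - b) ^ (1 - a) := by
    convert beta_mul_add_mul_le_rpow_beta_mul_rpow_beta hb hβ1 hβ ha0 (sub_nonneg.2 ha1)
      (add_sub_cancel a 1) using 2
    ring
  rw [gaussF, betaB_eq_beta hb hβ, mul_left_comm, inv_mul_le_iff₀ hB]
  calc x ^ a * ∫ t in (0:ℝ)..1, t ^ (b - 1) * (1 - t) ^ (c - b - 1) * (1 - x * t) ^ (-a)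
      ≤ beta b (c - b - a) := rpow_mul_integral_le_beta ha0 hb (by linarith) hx0 hx1
    _ ≤ beta b (c - b - 1) ^ a * beta b (c - b) ^ (1 - a) := hlogconv
    _ = beta b (c - b) * ((c - 1) / (c - b - 1)) ^ a := by
      rw [hrec, Real.mul_rpow (div_pos (by linarith) hβ1).le hB.le, mul_assoc, ← Real.rpow_add hB,
        add_sub_cancel, Real.rpow_one, mul_comm]

theorem stmt10 (H₁ H₂ : ℝ) (h1 : 1/2 ≤ H₁) (h12 : H₁ < H₂) (h2 : H₂ < 1)
    (x : ℝ) (hx : x ∈ Set.Ioo (0:ℝ) 1) :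
    x ^ (1 - H₂ + H₁) * gaussF (H₁ - H₂ + 1) (3/2 - H₁) (2 - H₁ + H₂) x
      ≤ ((1 - H₁ + H₂) / (H₂ - 1/2)) ^ (H₁ - H₂ + 1) := by
  have h := rpow_mul_gaussF_le (a := H₁ - H₂ + 1) (b := 3/2 - H₁) (c := 2 - H₁ + H₂)
    (by linarith) (by linarith) (by linarith) (by linarith) hx.1.le hx.2.le
  convert h using 3 <;> ring
end

section
/- Let 1/2 ≤ H₁ < H₂ < 1. For 0 < s < t ≤ T, the partial derivative in t of K_{H₁,H₂}(t,s) = β_{H₂} s^{1/2-H₂} ∫ₛᵗ (t-u)^{1/2-H₁} u^{H₂-H₁}(u-s)^{H₂-3/2} du equals (H₂-H₁)β_{H₂} s^{1/2-H₂}(t-s)^{H₂-H₁-1} · [∫₀¹ (1-z)^{1/2-H₁}(s+(t-s)z)^{H₂-H₁} z^{H₂-3/2} dz + (t-s)∫₀¹ (1-z)^{1/2-H₁}(s+(t-s)z)^{H₂-H₁-1} z^{H₂-1/2} dz]. -/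
open MeasureTheory

lemma aux_II {a r : ℝ} (ha : -1 < a) (hr : -1 < r) :
    IntervalIntegrable (fun z : ℝ => (1-z) ^ a * z ^ r) volume 0 1 := by
  have h1 : IntervalIntegrable (fun z : ℝ => (1-z) ^ a * z ^ r) volume 0 (1/2) := by
    have hr' : IntervalIntegrable (fun z : ℝ => z ^ r) volume 0 (1/2) :=
      intervalIntegral.intervalIntegrable_rpow' hr
    have hc : ContinuousOn (fun z : ℝ => (1-z) ^ a) (Set.uIcc 0 (1/2)) := by
      apply ContinuousOn.rpow_const (by fun_prop)
      intro x hx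
      rw [Set.uIcc_of_le (by norm_num)] at hx
      left
      have := hx.2
      intro h
      nlinarith [hx.1, hx.2]
    have := hr'.continuousOn_mul hc
    simpa [mul_comm] using this
  have h2 : IntervalIntegrable (fun z : ℝ => (1-z) ^ a * z ^ r) volume (1/2) 1 := by
    have hbase : IntervalIntegrable (fun z : ℝ => (1-z) ^ a) volume (1/2) 1 := by
      have h0 : IntervalIntegrable (fun x : ℝ => x ^ a) volume 0 (1/2) :=
        intervalIntegral.intervalIntegrable_rpow' ha
      have := h0.comp_sub_left 1
      norm_num at this
      exact this.symm
    have hc : ContinuousOn (fun z : ℝ => z ^ r) (Set.uIcc (1/2) 1) := by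
      apply ContinuousOn.rpow_const (by fun_prop)
      intro x hx
      rw [Set.uIcc_of_le (by norm_num)] at hx
      left
      nlinarith [hx.1]
    exact hbase.mul_continuousOn hc
  exact h1.trans h2

lemma subst_lemma (a b c s t' : ℝ) (hs : 0 < s) (hst : s < t') :
    (∫ u in s..t', (t' - u) ^ a * u ^ b * (u - s) ^ c)
      = (t' - s) ^ (a + c + 1) *
        ∫ z in (0:ℝ)..1, (1 - z) ^ a * (s + (t' - s)*z) ^ b * z ^ c := by
  set d := t' - s with hd
  have hd0 : 0 < d := sub_pos.2 hst
  have h := intervalIntegral.smul_integral_comp_mul_add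
    (a := (0:ℝ)) (b := 1) (f := fun u => (t' - u) ^ a * u ^ b * (u - s) ^ c) d s
  simp only [smul_eq_mul, mul_zero, zero_add, mul_one] at h
  have hds : d + s = t' := by rw [hd]; ring
  rw [hds] at h
  rw [← h]
  have hcong : ∫ z in (0:ℝ)..1, (t' - (d * z + s)) ^ a * (d * z + s) ^ b * (d * z + s - s) ^ c
      = (d ^ a * d ^ c) * ∫ z in (0:ℝ)..1, (1 - z) ^ a * (s + d*z) ^ b * z ^ c := by
    rw [← intervalIntegral.integral_const_mul]
    apply intervalIntegral.integral_congr
    intro z hz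
    rw [Set.uIcc_of_le (by norm_num)] at hz
    have hz0 : 0 ≤ z := hz.1
    have hz1 : z ≤ 1 := hz.2
    have e1 : t' - (d * z + s) = d * (1 - z) := by rw [hd]; ring
    have e2 : d * z + s - s = d * z := by ring
    have e3 : d * z + s = s + d * z := by ring
    simp only []
    rw [e1, e2, e3, Real.mul_rpow hd0.le (by linarith), Real.mul_rpow hd0.le hz0]
    ring
  rw [hcong]
  rw [show a + c + 1 = a + c + 1 from rfl]
  rw [Real.rpow_add hd0, Real.rpow_add hd0, Real.rpow_one]
  ring

lemma gderiv (a b c s t : ℝ) (ha : -1 < a) (hb : 0 < b) (hb1 : b ≤ 1) (hc : -1 < c)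
    (hs : 0 < s) (hst : s < t) :
    HasDerivAt (fun x : ℝ => ∫ z in (0:ℝ)..1, (1 - z) ^ a * (s + (x - s)*z) ^ b * z ^ c)
      (∫ z in (0:ℝ)..1, (1 - z) ^ a * (b * (s + (t - s)*z) ^ (b-1) * z) * z ^ c) t := by
  set μ := volume.restrict (Set.Ioc (0:ℝ) 1) with hμ
  set F : ℝ → ℝ → ℝ := fun x z => (1 - z) ^ a * (s + (x - s)*z) ^ b * z ^ c with hF
  set F' : ℝ → ℝ → ℝ := fun x z => (1 - z) ^ a * (b * (s + (x - s)*z) ^ (b-1) * z) * z ^ c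
    with hF'
  have hε : (0:ℝ) < (t - s)/2 := by linarith
  -- positivity facts in the ball
  have hball : ∀ x ∈ Metric.ball t ((t-s)/2), s < x := by
    intro x hx
    rw [Metric.mem_ball, Real.dist_eq, abs_sub_lt_iff] at hx
    linarith [hx.2]
  have hpos : ∀ x, s < x → ∀ z : ℝ, 0 ≤ z → 0 < s + (x - s)*z := by
    intro x hx z hz
    have : 0 ≤ (x - s) * z := mul_nonneg (by linarith) hz
    linarith
  have hmeas : ∀ x : ℝ, AEStronglyMeasurable (F x) μ := by
    intro x
    apply Measurable.aestronglyMeasurable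
    fun_prop
  have hmeas' : AEStronglyMeasurable (F' t) μ := by
    apply Measurable.aestronglyMeasurable
    fun_prop
  -- integrability of F t
  have hFt_int : Integrable (F t) μ := by
    have heq : F t = fun z => ((1 - z) ^ a * z ^ c) * (s + (t - s)*z) ^ b := by
      funext z; simp only [hF]; ring
    rw [heq]
    have hcont : ContinuousOn (fun z : ℝ => (s + (t - s)*z) ^ b) (Set.uIcc 0 1) := by
      apply ContinuousOn.rpow_const (by fun_prop)
      intro z hz
      rw [Set.uIcc_of_le (by norm_num)] at hz
      exact Or.inl (ne_of_gt (hpos t hst z hz.1))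
    have := (aux_II ha hc).mul_continuousOn hcont
    rw [intervalIntegrable_iff_integrableOn_Ioc_of_le (by norm_num)] at this
    exact this
  -- bound
  set bound : ℝ → ℝ := fun z => ((1 - z) ^ a * z ^ c) * (b * s ^ (b-1) * z) with hbd
  have hbound_int : Integrable bound μ := by
    have hcont : ContinuousOn (fun z : ℝ => b * s ^ (b-1) * z) (Set.uIcc 0 1) := by fun_prop
    have := (aux_II ha hc).mul_continuousOn hcont
    rw [intervalIntegrable_iff_integrableOn_Ioc_of_le (by norm_num)] at this
    exact this
  have h_bound : ∀ᵐ z ∂μ, ∀ x ∈ Metric.ball t ((t-s)/2), ‖F' x z‖ ≤ bound z := by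
    rw [hμ, ae_restrict_iff' measurableSet_Ioc]
    filter_upwards with z hz
    intro x hx
    have hz0 : 0 < z := hz.1
    have hz1 : z ≤ 1 := hz.2
    have hsx := hball x hx
    have hb1' : (0:ℝ) < s + (x - s)*z := hpos x hsx z hz0.le
    have hF'nn : 0 ≤ F' x z := by
      apply mul_nonneg
      apply mul_nonneg
      · exact Real.rpow_nonneg (by linarith) _
      · positivity
      · positivity
    rw [Real.norm_of_nonneg hF'nn]
    have hbz : bound z = (1 - z) ^ a * (b * s ^ (b-1) * z) * z ^ c := by rw [hbd]; ring
    rw [hbz]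
    have hmid : (s + (x - s)*z) ^ (b-1) ≤ s ^ (b-1) :=
      Real.rpow_le_rpow_of_nonpos hs (by nlinarith) (by linarith)
    have h1z : (0:ℝ) ≤ (1 - z) ^ a := Real.rpow_nonneg (by linarith) _
    have hzc : (0:ℝ) ≤ z ^ c := Real.rpow_nonneg hz0.le _
    simp only [hF']
    gcongr
  have h_diff : ∀ᵐ z ∂μ, ∀ x ∈ Metric.ball t ((t-s)/2),
      HasDerivAt (fun x => F x z) (F' x z) x := by
    rw [hμ, ae_restrict_iff' measurableSet_Ioc]
    filter_upwards with z hz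
    intro x hx
    have hz0 : 0 < z := hz.1
    have hsx := hball x hx
    have hb1' : (0:ℝ) < s + (x - s)*z := hpos x hsx z hz0.le
    have hinner : HasDerivAt (fun x : ℝ => s + (x - s)*z) z x := by
      have := (((hasDerivAt_id x).sub_const s).mul_const z).const_add s
      simpa using this
    have hmid : HasDerivAt (fun x : ℝ => (s + (x - s)*z) ^ b)
        (z * b * (s + (x - s)*z) ^ (b-1)) x :=
      hinner.rpow_const (Or.inl (ne_of_gt hb1'))
    have := (hmid.const_mul ((1 - z) ^ a)).mul_const (z ^ c)
    convert this using 1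
    · rfl
    · rfl
    simp only [hF']
    ring
  have key := hasDerivAt_integral_of_dominated_loc_of_deriv_le (Metric.ball_mem_nhds t hε)
    (Filter.Eventually.of_forall hmeas) hFt_int hmeas' h_bound hbound_int h_diff
  have h2 := key.2
  have hrw : ∀ G : ℝ → ℝ, (∫ z in (0:ℝ)..1, G z) = ∫ z, G z ∂μ := by
    intro G
    rw [intervalIntegral.integral_of_le (by norm_num), hμ]
  have hfun : (fun x : ℝ => ∫ z in (0:ℝ)..1, (1 - z) ^ a * (s + (x - s)*z) ^ b * z ^ c)
      = fun x => ∫ z, F x z ∂μ := by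
    funext x; exact hrw _
  rw [hfun, hrw]
  exact h2

theorem stmt19 (H₁ H₂ s t T : ℝ) (h1 : 1/2 ≤ H₁) (h12 : H₁ < H₂) (h2 : H₂ < 1)
    (hs : 0 < s) (hst : s < t) (htT : t ≤ T) :
    HasDerivAt
      (fun t' : ℝ =>
        (H₂ * (2*H₂ - 1) / betaB (H₂ - 1/2) (2 - 2*H₂)) ^ ((1:ℝ)/2) * s ^ (1/2 - H₂) *
          ∫ u in s..t', (t' - u) ^ (1/2 - H₁) * u ^ (H₂ - H₁) * (u - s) ^ (H₂ - 3/2))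
      ((H₂ - H₁) * (H₂ * (2*H₂ - 1) / betaB (H₂ - 1/2) (2 - 2*H₂)) ^ ((1:ℝ)/2) *
        s ^ (1/2 - H₂) * (t - s) ^ (H₂ - H₁ - 1) *
        ((∫ z in (0:ℝ)..1,
            (1 - z) ^ (1/2 - H₁) * (s + (t - s)*z) ^ (H₂ - H₁) * z ^ (H₂ - 3/2))
          + (t - s) *
            ∫ z in (0:ℝ)..1,
              (1 - z) ^ (1/2 - H₁) * (s + (t - s)*z) ^ (H₂ - H₁ - 1) * z ^ (H₂ - 1/2)))
      t := by
  set κ := (H₂ * (2*H₂ - 1) / betaB (H₂ - 1/2) (2 - 2*H₂)) ^ ((1:ℝ)/2) with hκ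
  set C := κ * s ^ (1/2 - H₂) with hC
  set a := 1/2 - H₁ with haa
  set b := H₂ - H₁ with hbb
  set c := H₂ - 3/2 with hcc
  have ha : -1 < a := by rw [haa]; linarith
  have hb : 0 < b := by rw [hbb]; linarith
  have hb1 : b ≤ 1 := by rw [hbb]; linarith
  have hc : -1 < c := by rw [hcc]; linarith
  set G : ℝ → ℝ := fun x => ∫ z in (0:ℝ)..1, (1 - z) ^ a * (s + (x - s)*z) ^ b * z ^ c
    with hG
  have hts : (0:ℝ) < t - s := by linarith
  -- derivative of x ↦ (x-s)^b
  have hpow : HasDerivAt (fun x : ℝ => (x - s) ^ b) (b * (t - s) ^ (b - 1)) t := by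
    have := ((hasDerivAt_id t).sub_const s).rpow_const (p := b) (Or.inl (ne_of_gt hts))
    simpa [mul_comm] using this
  have hGd := gderiv a b c s t ha hb hb1 hc hs hst
  have hprod := ((hpow.mul hGd).const_mul C)
  -- eventual equality
  have heq : (fun t' : ℝ => C *
      ∫ u in s..t', (t' - u) ^ a * u ^ b * (u - s) ^ c)
      =ᶠ[nhds t] fun x : ℝ => C * ((x - s) ^ b * G x) := by
    filter_upwards [Ioi_mem_nhds hst] with x hx
    rw [subst_lemma a b c s x hs hx]
    rw [show a + c + 1 = b by rw [haa, hbb, hcc]; ring]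
  have hfinal := (hprod.congr_of_eventuallyEq heq)
  -- identify the derivative value
  have hGval : (∫ z in (0:ℝ)..1, (1 - z) ^ a * (b * (s + (t - s)*z) ^ (b-1) * z) * z ^ c)
      = b * ∫ z in (0:ℝ)..1,
          (1 - z) ^ (1/2 - H₁) * (s + (t - s)*z) ^ (H₂ - H₁ - 1) * z ^ (H₂ - 1/2) := by
    rw [← intervalIntegral.integral_const_mul]
    apply intervalIntegral.integral_congr
    intro z hz
    rw [Set.uIcc_of_le (by norm_num)] at hz
    simp only []
    rw [haa, hbb, hcc]
    have hne : H₂ - 1/2 ≠ 0 := by intro h; linarith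
    rcases eq_or_lt_of_le hz.1 with h0 | h0
    · rw [← h0, Real.zero_rpow hne]
      ring
    · have : z ^ (H₂ - 1/2) = z ^ (H₂ - 3/2) * z := by
        rw [show H₂ - 1/2 = H₂ - 3/2 + 1 by ring, Real.rpow_add_one (ne_of_gt h0)]
      rw [this]
      ring
  convert hfinal using 1
  · rfl
  · rfl
  rw [hGval]
  have hpow2 : (t - s) ^ b = (t - s) ^ (b - 1) * (t - s) := by
    rw [← Real.rpow_add_one (ne_of_gt hts)]
    norm_num
  rw [hbb] at hpow2 ⊢
  rw [hpow2, haa]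
  ring
end
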